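/- arXiv:2006.01330 — 9 statements merged into one kernel-verified Lean document; each statement's English description precedes it below -/
import Mathlib

section
/- Let A be a commutative ring. If A is a weakly Arf ring, then for every x ∈ W(A) the ideal I = \overline{(x)} (the integral closure of the principal ideal xA) satisfies I² = xI; in particular every I ∈ Λ(A) satisfies I² = aI for some a ∈ I. Conversely, if A is Noetherian and for every I ∈ Λ(A) there exists a ∈ I with I² = aI, then A is a weakly Arf ring. -/
/-- `A` is a *weakly Arf ring*: whenever `x, y, z ∈ A` with `x` a non-zerodivisor on `A`
and the fractions `y/x` and `z/x` in the total ring of fractions `Q(A)` are integral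
over `A`, then `y * z ∈ x A`. -/
def IsWeaklyArfRing (A : Type*) [CommRing A] : Prop :=
  ∀ (x y z : A) (hx : x ∈ nonZeroDivisors A),
    IsIntegral A (IsLocalization.mk' (FractionRing A) y
      (⟨x, hx⟩ : nonZeroDivisors A)) →
    IsIntegral A (IsLocalization.mk' (FractionRing A) z
      (⟨x, hx⟩ : nonZeroDivisors A)) →
    y * z ∈ Ideal.span {x}

/-- `a` belongs to the integral closure of the ideal `I`: it satisfies an equation
`a ^ n + c 1 * a ^ (n - 1) + ⋯ + c n = 0` with `c i ∈ I ^ i`, for some `n ≥ 1`. -/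
def MemIdealIntegralClosure {A : Type*} [CommRing A] (I : Ideal A) (a : A) : Prop :=
  ∃ n : ℕ, 0 < n ∧ ∃ c : ℕ → A,
    (∀ i ∈ Finset.Icc 1 n, c i ∈ I ^ i) ∧
    a ^ n + ∑ i ∈ Finset.Icc 1 n, c i * a ^ (n - i) = 0

/-- The integral closure `Ī` of an ideal `I` of `A`, as a subset of `A`. -/
def idealIntegralClosure {A : Type*} [CommRing A] (I : Ideal A) : Set A :=
  {a | MemIdealIntegralClosure I a}

/-- An ideal `I` is integrally closed if `Ī = I`. -/
def Ideal.IsIntegrallyClosedIdeal {A : Type*} [CommRing A] (I : Ideal A) : Prop :=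
  idealIntegralClosure I = (I : Set A)

/-- `Λ(A)`: the set of ideals of `A` of the form `\overline{(x)}` (the integral closure
of the principal ideal `x A`) with `x` a non-zerodivisor on `A`. -/
def LambdaSet (A : Type*) [CommRing A] : Set (Ideal A) :=
  {J | ∃ x ∈ nonZeroDivisors A, (J : Set A) = idealIntegralClosure (Ideal.span {x})}

/-!
For a non-zerodivisor `x`, `\overline{(x)}` is the ideal `I` of all `a` with `a / x` integral
over `A`, so the weak Arf property at `x` says `I² ⊆ (x)`; it gives `I² = x I` because `y z = x c`
makes `c / x = (y / x) (z / x)` integral. Conversely, if `I² = a I` with `a ∈ I`, then `a` is a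
non-zerodivisor (as `x² ∈ a I`), `x ^ k I ⊆ a ^ k I` for all `k`, and the integral equation of `a`
over `(x)` yields `a² ∈ x I`. Hence `a I² = a² I ⊆ x I² = a x I`, and cancelling `a` gives
`I² = x I ⊆ (x)`.
-/

open Polynomial Finset IsLocalization

open scoped nonZeroDivisors

theorem Finset.sum_Icc_one_eq_sum_range {M : Type*} [AddCommMonoid M] (f : ℕ → M) (n : ℕ) :
    ∑ i ∈ Icc 1 n, f i = ∑ j ∈ range n, f (n - j) := by
  refine sum_nbij' (fun i => n - i) (fun j => n - j) ?_ ?_ ?_ ?_ ?_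
  all_goals intro i hi
  all_goals simp only [mem_Icc, mem_range] at hi ⊢
  all_goals first | omega | (congr 1; omega)

theorem Ideal.pow_mul_le_pow_mul {R : Type*} [CommSemiring R] {I J K : Ideal R}
    (h : J * I ≤ K * I) (k : ℕ) : J ^ k * I ≤ K ^ k * I := by
  induction k with
  | zero => simp
  | succ k ih =>
    calc J ^ (k + 1) * I = J ^ k * (J * I) := by ring
      _ ≤ J ^ k * (K * I) := Ideal.mul_mono_right h
      _ = K * (J ^ k * I) := by ring
      _ ≤ K * (K ^ k * I) := Ideal.mul_mono_right ih
      _ = K ^ (k + 1) * I := by ring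

section

variable {A : Type*} [CommRing A]

theorem Ideal.mul_mem_span_singleton_mul_iff {a b : A} {J : Ideal A} (ha : a ∈ A⁰) :
    a * b ∈ Ideal.span {a} * J ↔ b ∈ J := by
  rw [Ideal.span, Submodule.span_singleton_mul]
  exact Submodule.mul_mem_smul_iff ha

theorem Ideal.span_singleton_mul_le_sq {I : Ideal A} {x : A} (hx : x ∈ I) :
    Ideal.span {x} * I ≤ I ^ 2 :=
  sq I ▸ Ideal.mul_mono_left (Ideal.span_singleton_le_iff_mem I |>.mpr hx)

theorem Polynomial.monic_X_pow_add_sum_range {R : Type*} [Semiring R] (n : ℕ) (b : ℕ → R) :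
    (X ^ n + ∑ j ∈ range n, C (b j) * X ^ j).Monic := by
  refine monic_X_pow_add ?_
  rw [← mem_degreeLT]
  exact sum_mem fun j hj => by
    rw [mem_degreeLT]
    exact (degree_C_mul_X_pow_le _ _).trans_lt (by exact_mod_cast mem_range.mp hj)

theorem algebraMap_pow_mul_aeval_mk' {M : Submonoid A} {S : Type*} [CommRing S] [Algebra A S]
    [IsLocalization M S] (x : M) (a : A) (n : ℕ) (b : ℕ → A) :
    algebraMap A S (x ^ n) * aeval (mk' S a x) (X ^ n + ∑ j ∈ range n, C (b j) * X ^ j) =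
      algebraMap A S (a ^ n + ∑ j ∈ range n, b j * x ^ (n - j) * a ^ j) := by
  have hpow (k : ℕ) : algebraMap A S x ^ k * mk' S a x ^ k = algebraMap A S a ^ k := by
    rw [← mul_pow, mk'_spec']
  simp only [map_add, map_sum, map_mul, map_pow, aeval_X, aeval_C, mul_add, mul_sum, hpow]
  congr 1
  refine sum_congr rfl fun j hj => ?_
  rw [← Nat.sub_add_cancel (mem_range.mp hj).le, pow_add, Nat.add_sub_cancel, ← hpow]
  ring

section RingOfFractions

variable {M : Submonoid A} {S : Type*} [CommRing S] [Algebra A S] [IsLocalization M S]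

theorem isIntegral_mk'_iff (hM : M ≤ A⁰) (x : M) (a : A) :
    IsIntegral A (mk' S a x) ↔
      ∃ (n : ℕ) (b : ℕ → A), a ^ n + ∑ j ∈ range n, b j * x ^ (n - j) * a ^ j = 0 := by
  constructor
  · rintro ⟨p, hp, hpa⟩
    refine ⟨p.natDegree, p.coeff, IsLocalization.injective S hM ?_⟩
    rw [← algebraMap_pow_mul_aeval_mk', ← hp.as_sum, aeval_def, hpa, mul_zero, map_zero]
  · rintro ⟨n, b, h⟩
    refine ⟨_, monic_X_pow_add_sum_range n b, ?_⟩
    rw [← aeval_def, ← (IsLocalization.map_units S (x ^ n)).mul_right_eq_zero,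
      SubmonoidClass.coe_pow, algebraMap_pow_mul_aeval_mk', h, map_zero]

end RingOfFractions

theorem memIdealIntegralClosure_span_singleton_iff (x a : A) :
    MemIdealIntegralClosure (Ideal.span {x}) a ↔
      ∃ (n : ℕ) (b : ℕ → A), a ^ n + ∑ j ∈ range n, b j * x ^ (n - j) * a ^ j = 0 := by
  constructor
  · rintro ⟨n, -, c, hc, h⟩
    have hdvd (i : ℕ) (hi : i ∈ Icc 1 n) : ∃ d, d * x ^ i = c i :=
      Ideal.mem_span_singleton'.mp (Ideal.span_singleton_pow x i ▸ hc i hi)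
    choose! d hd using hdvd
    refine ⟨n, fun j => d (n - j), ?_⟩
    rw [← h, sum_Icc_one_eq_sum_range]
    refine congrArg _ (sum_congr rfl fun j hj => ?_)
    have hj := mem_range.mp hj
    rw [hd (n - j) (mem_Icc.mpr (by omega)), Nat.sub_sub_self hj.le]
  · rintro ⟨n, b, h⟩
    rcases n.eq_zero_or_pos with rfl | hn
    · have : Subsingleton A := subsingleton_of_zero_eq_one (by simpa using h.symm)
      exact ⟨1, one_pos, 0, fun _ _ => zero_mem _, Subsingleton.elim _ _⟩
    refine ⟨n, hn, fun i => b (n - i) * x ^ i, fun i _ => ?_, ?_⟩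
    · rw [Ideal.span_singleton_pow]
      exact Ideal.mem_span_singleton'.mpr ⟨_, rfl⟩
    · rw [← h, sum_Icc_one_eq_sum_range]
      refine congrArg _ (sum_congr rfl fun j hj => ?_)
      simp only [Nat.sub_sub_self (mem_range.mp hj).le]

theorem memIdealIntegralClosure_span_singleton_iff_isIntegral (x : A⁰) (a : A) :
    MemIdealIntegralClosure (Ideal.span {(x : A)}) a ↔
      IsIntegral A (mk' (FractionRing A) a x) :=
  (memIdealIntegralClosure_span_singleton_iff _ _).trans (isIntegral_mk'_iff le_rfl x a).symm

noncomputable def integralClosureSpanSingleton (x : A⁰) : Ideal A :=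
  (Subalgebra.toSubmodule (integralClosure A (FractionRing A))).comap
    (LinearMap.toSpanSingleton A (FractionRing A) (mk' (FractionRing A) 1 x))

theorem mem_integralClosureSpanSingleton {x : A⁰} {a : A} :
    a ∈ integralClosureSpanSingleton x ↔ IsIntegral A (mk' (FractionRing A) a x) := by
  simp [integralClosureSpanSingleton, mem_integralClosure_iff]

theorem coe_integralClosureSpanSingleton (x : A⁰) :
    (integralClosureSpanSingleton x : Set A) = idealIntegralClosure (Ideal.span {(x : A)}) :=
  Set.ext fun a => mem_integralClosureSpanSingleton.trans
    (memIdealIntegralClosure_span_singleton_iff_isIntegral x a).symm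

theorem eq_integralClosureSpanSingleton_of_coe_eq {x : A} (hx : x ∈ A⁰) {I : Ideal A}
    (hI : (I : Set A) = idealIntegralClosure (Ideal.span {x})) :
    I = integralClosureSpanSingleton ⟨x, hx⟩ :=
  SetLike.coe_injective (hI.trans (coe_integralClosureSpanSingleton ⟨x, hx⟩).symm)

theorem self_mem_integralClosureSpanSingleton (x : A⁰) :
    (x : A) ∈ integralClosureSpanSingleton x := by
  rw [mem_integralClosureSpanSingleton, mk'_self']
  exact isIntegral_one

theorem IsWeaklyArfRing.sq_integralClosureSpanSingleton (hA : IsWeaklyArfRing A) (x : A⁰) :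
    integralClosureSpanSingleton x ^ 2 =
      Ideal.span {(x : A)} * integralClosureSpanSingleton x := by
  refine le_antisymm ?_ (Ideal.span_singleton_mul_le_sq (self_mem_integralClosureSpanSingleton x))
  rw [sq, Ideal.mul_le]
  intro u hu v hv
  rw [mem_integralClosureSpanSingleton] at hu hv
  obtain ⟨c, hc⟩ := Ideal.mem_span_singleton'.mp (hA x u v x.2 hu hv)
  refine Ideal.mem_span_singleton_mul.mpr ⟨c, ?_, by rw [mul_comm, hc]⟩
  have hmk : mk' (FractionRing A) c x = mk' (FractionRing A) u x * mk' (FractionRing A) v x := by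
    rw [← mk'_mul, ← hc, mk'_cancel]
  rw [mem_integralClosureSpanSingleton, hmk]
  exact hu.mul hv

section StableIdeal

variable {I : Ideal A} {x a : A}

theorem mem_nonZeroDivisors_of_sq_eq_span_singleton_mul (hx : x ∈ A⁰) (hxI : x ∈ I)
    (hI : I ^ 2 = Ideal.span {a} * I) : a ∈ A⁰ := by
  have hxx : x * x ∈ Ideal.span {a} * I := hI ▸ sq I ▸ Ideal.mul_mem_mul hxI hxI
  obtain ⟨t, -, hat⟩ := Ideal.mem_span_singleton_mul.mp hxx
  exact (mul_mem_nonZeroDivisors.mp (hat ▸ mul_mem_nonZeroDivisors.mpr ⟨hx, hx⟩)).1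

/-- Since `x ^ k I ⊆ a ^ k I`, every term of `a` times the integral equation of `a` over `(x)` lies
in `a ^ (n - 1) x I`; cancel `a ^ (n - 1)`. -/
theorem sq_mem_span_singleton_mul_of_sq_eq (hxI : x ∈ I) (haI : a ∈ I) (ha : a ∈ A⁰)
    (hI : I ^ 2 = Ideal.span {a} * I) (hxa : MemIdealIntegralClosure (Ideal.span {x}) a) :
    a ^ 2 ∈ Ideal.span {x} * I := by
  obtain ⟨n, hn, c, hc, h⟩ := hxa
  have hpow := Ideal.pow_mul_le_pow_mul (hI ▸ Ideal.span_singleton_mul_le_sq hxI)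
  have hterm (i : ℕ) (hi : i ∈ Icc 1 n) :
      c i * a ^ (n - i) * a ∈ Ideal.span {a} ^ (n - 1) * (Ideal.span {x} * I) := by
    obtain ⟨hi1, hin⟩ := mem_Icc.mp hi
    have hca : c i * a ∈ Ideal.span {x} * (Ideal.span {a} ^ (i - 1) * I) := by
      have hle : Ideal.span {x} ^ i * I ≤ Ideal.span {x} * (Ideal.span {a} ^ (i - 1) * I) := by
        rw [← Nat.sub_add_cancel hi1, pow_succ', mul_assoc, Nat.add_sub_cancel]
        exact Ideal.mul_mono_right (hpow _)
      exact hle (Ideal.mul_mem_mul (hc i hi) haI)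
    have := Ideal.mul_mem_mul (Ideal.pow_mem_pow (Ideal.mem_span_singleton_self a) (n - i)) hca
    rw [show n - 1 = n - i + (i - 1) by omega, pow_add]
    convert this using 1 <;> ring
  have hsum : a ^ (n - 1) * a ^ 2 ∈ Ideal.span {a ^ (n - 1)} * (Ideal.span {x} * I) := by
    have heq : a ^ (n - 1) * a ^ 2 = -∑ i ∈ Icc 1 n, c i * a ^ (n - i) * a := by
      rw [← pow_add, show n - 1 + 2 = n + 1 by omega, pow_succ, ← sum_mul, ← neg_mul,
        eq_neg_of_add_eq_zero_left h]
    rw [heq, ← Ideal.span_singleton_pow]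
    exact neg_mem (sum_mem hterm)
  exact (Ideal.mul_mem_span_singleton_mul_iff (pow_mem ha _)).mp hsum

theorem sq_eq_span_singleton_mul_of_sq_mem (hxI : x ∈ I) (ha : a ∈ A⁰)
    (hI : I ^ 2 = Ideal.span {a} * I) (ha2 : a ^ 2 ∈ Ideal.span {x} * I) :
    I ^ 2 = Ideal.span {x} * I := by
  refine le_antisymm (fun y hy => ?_) (Ideal.span_singleton_mul_le_sq hxI)
  refine (Ideal.mul_mem_span_singleton_mul_iff ha).mp ?_
  have hle : Ideal.span {a} * I ^ 2 ≤ Ideal.span {a} * (Ideal.span {x} * I) :=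
    calc Ideal.span {a} * I ^ 2 = Ideal.span {a ^ 2} * I := by
          rw [hI, ← Ideal.span_singleton_pow]; ring
      _ ≤ Ideal.span {x} * I * I :=
          Ideal.mul_mono_left ((Ideal.span_singleton_le_iff_mem _).mpr ha2)
      _ = Ideal.span {a} * (Ideal.span {x} * I) := by rw [mul_assoc, ← sq, hI]; ring
  exact hle (Ideal.mul_mem_mul (Ideal.mem_span_singleton_self a) hy)

theorem sq_eq_span_singleton_mul_of_mem_integralClosure (hx : x ∈ A⁰) (hxI : x ∈ I)
    (haI : a ∈ I) (hxa : MemIdealIntegralClosure (Ideal.span {x}) a)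
    (hI : I ^ 2 = Ideal.span {a} * I) : I ^ 2 = Ideal.span {x} * I :=
  have ha := mem_nonZeroDivisors_of_sq_eq_span_singleton_mul hx hxI hI
  sq_eq_span_singleton_mul_of_sq_mem hxI ha hI
    (sq_mem_span_singleton_mul_of_sq_eq hxI haI ha hI hxa)

end StableIdeal

theorem isWeaklyArfRing_of_forall_mem_lambdaSet
    (h : ∀ I ∈ LambdaSet A, ∃ a ∈ I, I ^ 2 = Ideal.span {a} * I) : IsWeaklyArfRing A := by
  intro x y z hx hy hz
  obtain ⟨a, haI, hI⟩ := h _ ⟨x, hx, coe_integralClosureSpanSingleton ⟨x, hx⟩⟩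
  have hxa : MemIdealIntegralClosure (Ideal.span {x}) a :=
    (memIdealIntegralClosure_span_singleton_iff_isIntegral ⟨x, hx⟩ a).mpr
      (mem_integralClosureSpanSingleton.mp haI)
  have hxI : x ∈ integralClosureSpanSingleton ⟨x, hx⟩ := self_mem_integralClosureSpanSingleton _
  have hy' : y ∈ integralClosureSpanSingleton ⟨x, hx⟩ := mem_integralClosureSpanSingleton.mpr hy
  have hz' : z ∈ integralClosureSpanSingleton ⟨x, hx⟩ := mem_integralClosureSpanSingleton.mpr hz
  have hyz := Ideal.mul_mem_mul hy' hz'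
  rw [← sq, sq_eq_span_singleton_mul_of_mem_integralClosure hx hxI haI hxa hI] at hyz
  exact Ideal.mul_le_left hyz

end

/-- If `A` is weakly Arf then for every non-zerodivisor `x` the integral closure
`I = \overline{(x)}` satisfies `I² = x I`; in particular every `I ∈ Λ(A)` satisfies
`I² = a I` for some `a ∈ I`.  Conversely, if `A` is Noetherian and every `I ∈ Λ(A)`
satisfies `I² = a I` for some `a ∈ I`, then `A` is weakly Arf. -/
theorem weaklyArf_iff_stable_integral_closures (A : Type*) [CommRing A] :
    (IsWeaklyArfRing A →
      ∀ x ∈ nonZeroDivisors A, ∀ I : Ideal A,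
        (I : Set A) = idealIntegralClosure (Ideal.span {x}) →
          I ^ 2 = Ideal.span {x} * I) ∧
    (IsWeaklyArfRing A →
      ∀ I ∈ LambdaSet A, ∃ a ∈ I, I ^ 2 = Ideal.span {a} * I) ∧
    (IsNoetherianRing A →
      (∀ I ∈ LambdaSet A, ∃ a ∈ I, I ^ 2 = Ideal.span {a} * I) →
      IsWeaklyArfRing A) := by
  refine ⟨fun hA x hx I hI => ?_, fun hA I ⟨x, hx, hI⟩ => ?_,
    fun _ => isWeaklyArfRing_of_forall_mem_lambdaSet⟩
  · rw [eq_integralClosureSpanSingleton_of_coe_eq hx hI]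
    exact hA.sq_integralClosureSpanSingleton ⟨x, hx⟩
  · obtain rfl := eq_integralClosureSpanSingleton_of_coe_eq hx hI
    exact ⟨x, self_mem_integralClosureSpanSingleton _, hA.sq_integralClosureSpanSingleton _⟩
end

section
/- Let A be a Noetherian ring, let a ∈ W(A) and b ∈ A. If for every P ∈ X₁(A) the image of b in the localization A_P belongs to the ideal aA_P, then b ∈ aA. Equivalently, regarding the localizations A_P (P ∈ X₁(A)) inside Q(A), one has ⋂_{P ∈ X₁(A)} A_P = A. -/
/-- `xs` is a regular sequence on `R`: for each `i`, the element `xs i` acts injectively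
on `R / (xs 0, …, xs (i-1))`. -/
def IsRegularSeq (R : Type*) [CommRing R] (xs : List R) : Prop :=
  ∀ (i : ℕ) (h : i < xs.length),
    IsSMulRegular (R ⧸ Ideal.span {y : R | y ∈ xs.take i}) (xs.get ⟨i, h⟩)

/-- For a Noetherian local ring `R`, `depth R ≥ n` holds iff there is a regular sequence
of length `n` consisting of elements of the maximal ideal. -/
def RingDepthGE (R : Type*) [CommRing R] [IsLocalRing R] (n : ℕ) : Prop :=
  ∃ xs : List R, xs.length = n ∧ (∀ x ∈ xs, x ∈ IsLocalRing.maximalIdeal R) ∧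
    IsRegularSeq R xs

/-! If `b ∉ aA`, take an associated prime `P = ann(z̄)` of `A/aA` containing the annihilator of
`b̄`. In `A_P` the maximal ideal multiplies `z` into `aA_P` although `z ∉ aA_P`; as `a` is
regular, this rules out a regular sequence of length two in the maximal ideal, so
`depth A_P ≤ 1`. The hypothesis then yields `u ∉ P` with `u b ∈ aA`, i.e. `u ∈ ann(b̄) ⊆ P`. -/

open IsLocalRing Ideal nonZeroDivisors

section RegularSequence

variable {R : Type*} [CommRing R] {x y : R}

lemma IsRegularSeq.eq_zero_of_head_mul_eq_zero (hxy : IsRegularSeq R [x, y]) {v : R}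
    (hv : x * v = 0) : v = 0 := by
  have hspan : span {t : R | t ∈ [x, y].take 0} = ⊥ := by simp
  have hinj := hxy 0 (by simp)
  have : x • (Ideal.Quotient.mk _ v : R ⧸ span {t : R | t ∈ [x, y].take 0}) = x • 0 := by
    rw [smul_zero, Algebra.smul_def, Ideal.Quotient.algebraMap_eq, ← map_mul, hv, map_zero]
  have hv0 := hinj this
  rwa [Ideal.Quotient.eq_zero_iff_mem, hspan, mem_bot] at hv0

lemma IsRegularSeq.mem_span_of_mul_mem (hxy : IsRegularSeq R [x, y]) {v : R}
    (hv : y * v ∈ span {x}) : v ∈ span {x} := by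
  have hspan : span {t : R | t ∈ [x, y].take 1} = span {x} := by simp
  have hinj := hxy 1 (by simp)
  have : y • (Ideal.Quotient.mk _ v : R ⧸ span {t : R | t ∈ [x, y].take 1}) = y • 0 := by
    rw [smul_zero, Algebra.smul_def, Ideal.Quotient.algebraMap_eq, ← map_mul,
      Ideal.Quotient.eq_zero_iff_mem, hspan]
    exact hv
  have hv0 := hinj this
  rwa [Ideal.Quotient.eq_zero_iff_mem, hspan] at hv0

lemma IsRegularSeq.mem_span_singleton_of_mul_mem (hxy : IsRegularSeq R [x, y]) {a w : R}
    (ha : a ∈ R⁰) (hx : x * w ∈ span {a}) (hy : y * w ∈ span {a}) : w ∈ span {a} := by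
  -- `x w = w₁ a` and `y w = w₂ a` force `y w₁ = x w₂`, hence `w₁ ∈ (x)` and then `w ∈ (a)`.
  obtain ⟨w₁, hw₁⟩ := mem_span_singleton'.mp hx
  obtain ⟨w₂, hw₂⟩ := mem_span_singleton'.mp hy
  have hyw₁ : y * w₁ = x * w₂ :=
    sub_eq_zero.mp <| mem_nonZeroDivisors_iff_right.mp ha _ <| by
      linear_combination y * hw₁ - x * hw₂
  obtain ⟨u, hu⟩ := mem_span_singleton'.mp <|
    hxy.mem_span_of_mul_mem (mem_span_singleton'.mpr ⟨w₂, by rw [hyw₁, mul_comm]⟩)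
  have : w - a * u = 0 := hxy.eq_zero_of_head_mul_eq_zero <| by linear_combination -hw₁ - a * hu
  exact mem_span_singleton'.mpr ⟨u, by linear_combination -this⟩

end RegularSequence

lemma not_ringDepthGE_two_of_maximalIdeal_mul_mem {R : Type*} [CommRing R] [IsLocalRing R]
    {a w : R} (ha : a ∈ R⁰) (hw : ∀ x ∈ maximalIdeal R, x * w ∈ span {a})
    (hnw : w ∉ span {a}) : ¬ RingDepthGE R 2 := by
  rintro ⟨_ | ⟨x, _ | ⟨y, _ | ⟨_, _⟩⟩⟩, hlen, hmem, hxy⟩ <;> simp only [List.length] at hlen <;>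
    try omega
  exact hnw <| hxy.mem_span_singleton_of_mul_mem ha (hw x (hmem x (by simp)))
    (hw y (hmem y (by simp)))

lemma IsLocalization.algebraMap_mem_span_singleton_iff {R S : Type*} [CommRing R] [CommRing S]
    [Algebra R S] (M : Submonoid R) [IsLocalization M S] (a b : R) :
    algebraMap R S b ∈ span {algebraMap R S a} ↔ ∃ m ∈ M, m * b ∈ span {a} := by
  rw [← Set.image_singleton, ← map_span, algebraMap_mem_map_algebraMap_iff M]

lemma Ideal.mem_colon_bot_quotient_mk_iff {A : Type*} [CommRing A] (I : Ideal A) (u z : A) :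
    u ∈ (⊥ : Submodule A (A ⧸ I)).colon {Ideal.Quotient.mk I z} ↔ u * z ∈ I := by
  rw [Submodule.mem_colon_singleton, Submodule.mem_bot, Algebra.smul_def,
    Ideal.Quotient.algebraMap_eq, ← map_mul, Ideal.Quotient.eq_zero_iff_mem]

lemma not_ringDepthGE_two_of_isAssociatedPrime {A : Type*} [CommRing A] [IsNoetherianRing A]
    {a : A} (ha : a ∈ A⁰) {P : Ideal A} [P.IsPrime] (hP : IsAssociatedPrime P (A ⧸ span {a})) :
    ¬ RingDepthGE (Localization.AtPrime P) 2 := by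
  obtain ⟨-, z', hz'⟩ := isAssociatedPrime_iff.mp hP
  obtain ⟨z, rfl⟩ := Ideal.Quotient.mk_surjective z'
  have hPz : ∀ u, u ∈ P ↔ u * z ∈ span {a} := fun u => by
    rw [hz', mem_colon_bot_quotient_mk_iff]
  refine not_ringDepthGE_two_of_maximalIdeal_mul_mem (w := algebraMap A _ z)
    (IsLocalization.nonZeroDivisors_le_comap P.primeCompl _ ha) ?_ ?_
  · have hle : P.map (algebraMap A (Localization.AtPrime P)) ≤
        (span {algebraMap A _ a}).colon {algebraMap A _ z} :=
      map_le_iff_le_comap.mpr fun p hp => by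
        rw [mem_comap, Submodule.mem_colon_singleton, smul_eq_mul, ← map_mul,
          ← Set.image_singleton, ← map_span]
        exact mem_map_of_mem _ ((hPz p).mp hp)
    intro x hx
    rw [← Localization.AtPrime.map_eq_maximalIdeal] at hx
    exact Submodule.mem_colon_singleton.mp (hle hx)
  · rw [IsLocalization.algebraMap_mem_span_singleton_iff P.primeCompl]
    rintro ⟨u, hu, huz⟩
    exact hu ((hPz u).mpr huz)

/-- Let `A` be Noetherian, `a ∈ W(A)` and `b ∈ A`.  If for every prime `P ∈ X₁(A)`
(i.e. `depth A_P ≤ 1`) the image of `b` in `A_P` lies in `a A_P`, then `b ∈ a A`. -/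
theorem mem_span_of_forall_X1 (A : Type*) [CommRing A] [IsNoetherianRing A]
    (a b : A) (ha : a ∈ nonZeroDivisors A)
    (h : ∀ (P : Ideal A) [P.IsPrime],
      ¬ RingDepthGE (Localization.AtPrime P) 2 →
      algebraMap A (Localization.AtPrime P) b ∈
        Ideal.span {algebraMap A (Localization.AtPrime P) a}) :
    b ∈ Ideal.span {a} := by
  by_contra hb
  obtain ⟨P, hP, hbP⟩ := exists_le_isAssociatedPrime_of_isNoetherianRing A
    (Ideal.Quotient.mk (span {a}) b) (by rwa [ne_eq, Ideal.Quotient.eq_zero_iff_mem])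
  have := hP.toIsPrime
  obtain ⟨u, hu, hub⟩ := (IsLocalization.algebraMap_mem_span_singleton_iff P.primeCompl a b).mp
    (h P (not_ringDepthGE_two_of_isAssociatedPrime ha hP))
  exact hu (hbP ((mem_colon_bot_quotient_mk_iff _ _ _).mpr hub))
end

section
/- Let A be a Noetherian ring. (a) If A_P is a weakly Arf ring for every P ∈ X₁(A), then A is a weakly Arf ring. (b) If A satisfies Serre's condition (S₁) and A is a weakly Arf ring, then S⁻¹A is a weakly Arf ring for every multiplicatively closed subset S of A; in particular A_P is a weakly Arf ring for every prime ideal P of A. -/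
/-!
(a) If `y * z ∉ x A`, take an associated prime `P` of `A ⧸ x A` containing the annihilator of
the class of `y * z`. Then `P A_P` is associated to `A_P ⧸ x A_P`, which forces `depth A_P ≤ 1`,
so `A_P` is weakly Arf and `y * z ∈ x A_P`: some `s ∉ P` has `s * y * z ∈ x A`, contradicting
the choice of `P`.

(b) After clearing denominators, `x, y, z` are the images of `a, b, c ∈ A`. Under `(S₁)` the
associated primes of `A` are its minimal primes, so Davis' prime avoidance over them replaces `a`
by a non-zerodivisor `a + l` with `l` in the kernel of `A → S⁻¹A`. The integral equations of
`b / a` and `c / a` descend to `A` once `b` and `c` are multiplied by elements of `S`, and the weak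
Arf property of `A` concludes.
-/

open scoped TensorProduct

/-- Serre's condition `(S_n)`: `depth A_P ≥ min (n, dim A_P)` for every prime ideal `P`
of `A`. -/
def SerreSCondition (A : Type*) [CommRing A] (n : ℕ) : Prop :=
  ∀ (P : Ideal A) [P.IsPrime], ∀ k : ℕ, k ≤ n →
    (k : WithBot (WithTop ℕ)) ≤ ringKrullDim (Localization.AtPrime P) →
    RingDepthGE (Localization.AtPrime P) k

open Polynomial

/-- `y / x` is integral, stated without dividing: `x ^ deg p * p (y / x) = 0` for a monic `p`. -/
def IsIntegralFrac {A : Type*} [CommRing A] (y x : A) : Prop :=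
  ∃ p : A[X], p.Monic ∧ (p.scaleRoots x).eval y = 0

namespace IsIntegralFrac

variable {A B : Type*} [CommRing A] [CommRing B] {x y : A}

theorem zero_left (x : A) : IsIntegralFrac 0 x :=
  ⟨X, monic_X, by simp [← coeff_zero_eq_eval_zero, coeff_scaleRoots]⟩

theorem iff_isIntegral_mk' (K : Type*) [CommRing K] [Algebra A K] [IsFractionRing A K]
    (hx : x ∈ nonZeroDivisors A) :
    IsIntegralFrac y x ↔ IsIntegral A (IsLocalization.mk' K y ⟨x, hx⟩) := by
  set ξ := IsLocalization.mk' K y (⟨x, hx⟩ : nonZeroDivisors A)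
  have hunit : IsUnit (algebraMap A K x) :=
    IsLocalization.map_units K (⟨x, hx⟩ : nonZeroDivisors A)
  have key (p : A[X]) : algebraMap A K ((p.scaleRoots x).eval y) =
      algebraMap A K x ^ p.natDegree * p.eval₂ (algebraMap A K) ξ := by
    rw [← eval₂_at_apply, ← IsLocalization.mk'_spec' K y ⟨x, hx⟩, scaleRoots_eval₂_mul]
  refine ⟨fun ⟨p, hp, hpy⟩ ↦ ⟨p, hp, ?_⟩, fun ⟨p, hp, hpξ⟩ ↦ ⟨p, hp, ?_⟩⟩
  · rw [← (hunit.pow p.natDegree).mul_right_eq_zero, ← key, hpy, map_zero]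
  · exact IsFractionRing.injective A K (by rw [key, hpξ, mul_zero, map_zero])

theorem map (f : A →+* B) (h : IsIntegralFrac y x) : IsIntegralFrac (f y) (f x) := by
  obtain ⟨p, hp, hpy⟩ := h
  refine ⟨p.map f, hp.map f, ?_⟩
  rcases subsingleton_or_nontrivial B with _ | _
  · exact Subsingleton.elim _ _
  rw [← map_scaleRoots _ _ _ (by simp [hp.leadingCoeff]), eval_map, eval₂_at_apply, hpy,
    map_zero]

theorem mul_mul (u : A) (h : IsIntegralFrac y x) : IsIntegralFrac (u * y) (u * x) := by
  obtain ⟨p, hp, hpy⟩ := h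
  exact ⟨p, hp, by rw [mul_comm u x, scaleRoots_mul, scaleRoots_eval_mul, hpy, mul_zero]⟩

theorem of_mul_eval_eq_zero {p : A[X]} (hp : p.Monic) {u : A}
    (h : u * (p.scaleRoots x).eval y = 0) : IsIntegralFrac (u * y) x := by
  rcases Nat.eq_zero_or_pos p.natDegree with hdeg | hdeg
  · rw [eq_one_of_monic_natDegree_zero hp hdeg, one_scaleRoots, eval_one, mul_one] at h
    rw [h, zero_mul]
    exact zero_left x
  refine ⟨p.scaleRoots u, (monic_scaleRoots_iff u).2 hp, ?_⟩
  calc ((p.scaleRoots u).scaleRoots x).eval (u * y)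
      = ((p.scaleRoots x).scaleRoots u).eval (u * y) := by
        rw [← scaleRoots_mul, ← scaleRoots_mul, mul_comm u x]
    _ = u ^ (p.natDegree - 1) * (u * (p.scaleRoots x).eval y) := by
        rw [scaleRoots_eval_mul, natDegree_scaleRoots, ← mul_assoc, ← pow_succ,
          Nat.sub_add_cancel hdeg]
    _ = 0 := by rw [h, mul_zero]

theorem exists_mul_of_algebraMap [Algebra A B] (M : Submonoid A) [IsLocalization M B]
    (h : IsIntegralFrac (algebraMap A B y) (algebraMap A B x)) :
    ∃ m ∈ M, IsIntegralFrac (m * y) x := by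
  rcases subsingleton_or_nontrivial B with _ | _
  · obtain ⟨m, hm⟩ := (IsLocalization.map_eq_zero_iff M B 1).mp (Subsingleton.elim _ _)
    rw [mul_one] at hm
    exact ⟨0, hm ▸ m.2, by rw [zero_mul]; exact zero_left x⟩
  obtain ⟨p, hp, hpy⟩ := h
  set σ := IsLocalization.commonDenom M p.support p.coeff
  obtain ⟨q, hqp, -, hq⟩ := lifts_and_natDegree_eq_and_monic
    (IsLocalization.scaleRoots_commonDenom_mem_lifts M p (by simp [hp.leadingCoeff]))
    ((monic_scaleRoots_iff _).2 hp)
  have hzero : algebraMap A B ((q.scaleRoots x).eval (σ * y)) = 0 := by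
    rw [← eval₂_at_apply, ← eval_map, map_scaleRoots _ _ _ (by simp [hq.leadingCoeff]), hqp,
      ← scaleRoots_mul, mul_comm (algebraMap A B σ), scaleRoots_mul, map_mul,
      scaleRoots_eval_mul, hpy, mul_zero]
  obtain ⟨u, hu⟩ := (IsLocalization.map_eq_zero_iff M B _).mp hzero
  exact ⟨u * σ, mul_mem u.2 σ.2, by rw [mul_assoc]; exact of_mul_eval_eq_zero hq hu⟩

end IsIntegralFrac

theorem isWeaklyArfRing_iff {A : Type*} [CommRing A] :
    IsWeaklyArfRing A ↔ ∀ x ∈ nonZeroDivisors A, ∀ y z : A,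
      IsIntegralFrac y x → IsIntegralFrac z x → y * z ∈ Ideal.span {x} := by
  have hiff {x y : A} (hx : x ∈ nonZeroDivisors A) := IsIntegralFrac.iff_isIntegral_mk' (y := y)
    (FractionRing A) hx
  exact ⟨fun h x hx y z hy hz ↦ h x y z hx ((hiff hx).1 hy) ((hiff hx).1 hz),
    fun h x y z hx hy hz ↦ h x hx y z ((hiff hx).2 hy) ((hiff hx).2 hz)⟩

section Depth

variable {R : Type*} [CommRing R]

theorem IsRegularSeq.head_mem_nonZeroDivisors {a : R} {l : List R}
    (h : IsRegularSeq R (a :: l)) : a ∈ nonZeroDivisors R := by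
  have h0 := h 0 (by simp)
  rw [show {y : R | y ∈ (a :: l).take 0} = ∅ by simp, Ideal.span_empty] at h0
  refine mem_nonZeroDivisors_iff_right.2 fun u hu ↦ ?_
  simpa using
    mem_of_isSMulRegular_quotient_of_smul_mem h0 (x := u) (by simpa [mul_comm] using hu)

theorem IsRegularSeq.isSMulRegular_quotient_span_head {a b : R} {l : List R}
    (h : IsRegularSeq R (a :: b :: l)) : IsSMulRegular (R ⧸ Ideal.span {a}) b := by
  have h1 := h 1 (by simp)
  rwa [show {y : R | y ∈ (a :: b :: l).take 1} = {a} by simp] at h1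

variable [IsLocalRing R]

theorem RingDepthGE.exists_of_one (h : RingDepthGE R 1) :
    ∃ a ∈ IsLocalRing.maximalIdeal R, a ∈ nonZeroDivisors R := by
  obtain ⟨_ | ⟨a, _ | _⟩, hlen, hmem, hreg⟩ := h <;> simp at hlen
  exact ⟨a, hmem a (by simp), hreg.head_mem_nonZeroDivisors⟩

theorem RingDepthGE.exists_of_two (h : RingDepthGE R 2) :
    ∃ a ∈ IsLocalRing.maximalIdeal R, ∃ b ∈ IsLocalRing.maximalIdeal R,
      a ∈ nonZeroDivisors R ∧ IsSMulRegular (R ⧸ Ideal.span {a}) b := by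
  obtain ⟨_ | ⟨a, _ | ⟨b, _ | _⟩⟩, hlen, hmem, hreg⟩ := h <;> simp at hlen
  exact ⟨a, hmem a (by simp), b, hmem b (by simp), hreg.head_mem_nonZeroDivisors,
    hreg.isSMulRegular_quotient_span_head⟩

/-- If the maximal ideal is associated to `R ⧸ xR` for a non-zerodivisor `x`, then
`depth R ≤ 1`. -/
theorem not_ringDepthGE_two {x w : R} (hx : x ∈ nonZeroDivisors R) (hw : w ∉ Ideal.span {x})
    (hmw : ∀ m ∈ IsLocalRing.maximalIdeal R, m * w ∈ Ideal.span {x}) :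
    ¬ RingDepthGE R 2 := by
  intro h
  obtain ⟨a, ha, b, hb, ha0, hb0⟩ := h.exists_of_two
  obtain ⟨wa, hwa⟩ := Ideal.mem_span_singleton'.1 (hmw a ha)
  obtain ⟨wb, hwb⟩ := Ideal.mem_span_singleton'.1 (hmw b hb)
  have hab : b * wa = a * wb :=
    (mul_cancel_right_mem_nonZeroDivisors hx).1 (by linear_combination b * hwa - a * hwb)
  obtain ⟨c, hc⟩ := Ideal.mem_span_singleton'.1 <| mem_of_isSMulRegular_quotient_of_smul_mem hb0
    (show b * wa ∈ Ideal.span {a} from hab ▸ Ideal.mem_span_singleton'.2 ⟨wb, mul_comm _ _⟩)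
  have hwc : (w - c * x) * a = 0 := by linear_combination (-1 : R) * hwa - x * hc
  exact hw (Ideal.mem_span_singleton'.2 ⟨c, by
    linear_combination -(mul_right_mem_nonZeroDivisors_eq_zero_iff ha0).1 hwc⟩)

end Depth

section LocalizationAtPrime

variable {A : Type*} [CommRing A] {P J : Ideal A} [P.IsPrime] {w : A}

theorem algebraMap_notMem_map_of_forall_mem_iff (hP : ∀ r, r ∈ P ↔ r * w ∈ J) :
    algebraMap A (Localization.AtPrime P) w ∉ J.map (algebraMap A (Localization.AtPrime P)) := by
  rw [IsLocalization.algebraMap_mem_map_algebraMap_iff P.primeCompl]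
  rintro ⟨s, hs, hsw⟩
  exact hs ((hP s).2 hsw)

theorem mul_algebraMap_mem_map_of_forall_mem_iff (hP : ∀ r, r ∈ P ↔ r * w ∈ J)
    {m : Localization.AtPrime P} (hm : m ∈ IsLocalRing.maximalIdeal (Localization.AtPrime P)) :
    m * algebraMap A _ w ∈ J.map (algebraMap A (Localization.AtPrime P)) := by
  obtain ⟨r, s, rfl⟩ := IsLocalization.exists_mk'_eq P.primeCompl m
  rw [IsLocalization.AtPrime.mk'_mem_maximal_iff (Localization.AtPrime P) P] at hm
  rw [mul_comm, IsLocalization.mul_mk'_eq_mk'_of_mul, IsLocalization.mk'_mem_map_algebraMap_iff]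
  exact ⟨1, one_mem _, by rw [one_mul, mul_comm]; exact (hP r).1 hm⟩

end LocalizationAtPrime

theorem isWeaklyArfRing_of_forall_not_ringDepthGE_two {A : Type*} [CommRing A]
    [IsNoetherianRing A]
    (h : ∀ (P : Ideal A) [P.IsPrime], ¬ RingDepthGE (Localization.AtPrime P) 2 →
      IsWeaklyArfRing (Localization.AtPrime P)) :
    IsWeaklyArfRing A := by
  refine isWeaklyArfRing_iff.2 fun x hx y z hy hz ↦ ?_
  by_contra hyz
  obtain ⟨P, hPass, hle⟩ := exists_le_isAssociatedPrime_of_isNoetherianRing A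
    (Ideal.Quotient.mk (Ideal.span {x}) (y * z)) (by rwa [Ne, Ideal.Quotient.eq_zero_iff_mem])
  obtain ⟨hP, w', hw'⟩ := isAssociatedPrime_iff.1 hPass
  obtain ⟨w, rfl⟩ := Ideal.Quotient.mk_surjective w'
  have hPw (r : A) : r ∈ P ↔ r * w ∈ Ideal.span {x} := by
    rw [hw', Submodule.mem_colon_singleton, Submodule.mem_bot, ← Ideal.Quotient.eq_zero_iff_mem]
    rfl
  set ι := algebraMap A (Localization.AtPrime P)
  have hspan : (Ideal.span {x}).map ι = Ideal.span {ι x} := by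
    rw [Ideal.map_span, Set.image_singleton]
  have hxP : ι x ∈ nonZeroDivisors _ :=
    IsLocalization.map_nonZeroDivisors_le P.primeCompl _ (Submonoid.mem_map_of_mem _ hx)
  have hdepth : ¬ RingDepthGE (Localization.AtPrime P) 2 :=
    not_ringDepthGE_two hxP (hspan ▸ algebraMap_notMem_map_of_forall_mem_iff hPw)
      fun m hm ↦ hspan ▸ mul_algebraMap_mem_map_of_forall_mem_iff hPw hm
  have hyzP := isWeaklyArfRing_iff.1 (h P hdepth) _ hxP _ _ (hy.map ι) (hz.map ι)
  rw [← map_mul, ← hspan, IsLocalization.algebraMap_mem_map_algebraMap_iff P.primeCompl] at hyzP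
  obtain ⟨s, hs, hsyz⟩ := hyzP
  refine hs (hle ?_)
  rw [Submodule.mem_colon_singleton, Submodule.mem_bot]
  exact Ideal.Quotient.eq_zero_iff_mem.2 hsyz

theorem exists_notMem_mul_pow_eq_zero_of_mem_minimalPrimes {A : Type*} [CommRing A]
    {P : Ideal A} (hP : P ∈ minimalPrimes A) {t : A} (ht : t ∈ P) :
    ∃ u ∉ P, ∃ n : ℕ, u * t ^ n = 0 := by
  have := hP.isPrime
  have hnil : algebraMap A (Localization.AtPrime P) t ∈
      ((⊥ : Ideal A).map (algebraMap A (Localization.AtPrime P))).radical := by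
    rw [IsLocalization.AtPrime.radical_map_of_mem_minimalPrimes _ P ⊥ hP]
    exact Ideal.mem_map_of_mem _ ht
  obtain ⟨n, hn⟩ := hnil
  rw [Ideal.map_bot, Ideal.mem_bot, ← map_pow, IsLocalization.map_eq_zero_iff P.primeCompl] at hn
  obtain ⟨⟨u, hu⟩, hut⟩ := hn
  exact ⟨u, hu, n, hut⟩

/-- Davis' prime avoidance. -/
theorem Ideal.exists_mem_forall_add_notMem {A : Type*} [CommRing A] {s : Finset (Ideal A)}
    (hprime : ∀ P ∈ s, P.IsPrime) (hs : IsAntichain (· ≤ ·) (s : Set (Ideal A)))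
    {I : Ideal A} {a : A} (h : ∀ P ∈ s, I ≤ P → a ∉ P) :
    ∃ l ∈ I, ∀ P ∈ s, a + l ∉ P := by
  classical
  induction s using Finset.induction with
  | empty => exact ⟨0, I.zero_mem, by simp⟩
  | @insert Q s hQs ih =>
    simp only [Finset.mem_insert, forall_eq_or_imp] at hprime h ⊢
    obtain ⟨l, hlI, hl⟩ := ih hprime.2 (hs.subset (by simp)) h.2
    by_cases hQ : a + l ∈ Q
    swap
    · exact ⟨l, hlI, hQ, hl⟩
    have hIQ : ¬ I ≤ Q := fun hIQ ↦ h.1 hIQ (by simpa using Q.sub_mem hQ (hIQ hlI))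
    obtain ⟨μ, hμI, hμQ⟩ := SetLike.not_le_iff_exists.1 hIQ
    have hsQ : ¬ s.inf id ≤ Q := by
      rw [hprime.1.inf_le']
      rintro ⟨P, hPs, hPQ⟩
      exact hQs (hs.eq (by simp [hPs]) (by simp) hPQ ▸ hPs)
    obtain ⟨π, hπs, hπQ⟩ := SetLike.not_le_iff_exists.1 hsQ
    refine ⟨l + μ * π, I.add_mem hlI (I.mul_mem_right _ hμI), ?_, fun P hP hlP ↦ ?_⟩
    · rw [← add_assoc]
      exact fun hQ' ↦ hprime.1.mul_notMem hμQ hπQ (by simpa using Q.sub_mem hQ' hQ)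
    · have hπP : π ∈ P := Finset.inf_le (f := id) hP hπs
      exact hl P hP (by simpa [← add_assoc] using P.sub_mem hlP (P.mul_mem_left μ hπP))

section SerreS1

variable {A : Type*} [CommRing A] [IsNoetherianRing A]

theorem mem_minimalPrimes_of_isAssociatedPrime (hS1 : SerreSCondition A 1) {P : Ideal A}
    (hP : IsAssociatedPrime P A) : P ∈ minimalPrimes A := by
  obtain ⟨hPprime, w, hw⟩ := isAssociatedPrime_iff.1 hP
  have hPw (r : A) : r ∈ P ↔ r * w ∈ (⊥ : Ideal A) := by
    rw [hw, Submodule.mem_colon_singleton, smul_eq_mul]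
  by_contra hmin
  have hdim : ((1 : ℕ) : WithBot (WithTop ℕ)) ≤ ringKrullDim (Localization.AtPrime P) := by
    rw [IsLocalization.AtPrime.ringKrullDim_eq_height P]
    exact WithBot.coe_le_coe.2 <|
      (Order.one_le_iff_ne_zero (α := ℕ∞)).2 (mt Ideal.height_eq_zero_iff.1 hmin)
  obtain ⟨a, ha, ha0⟩ := (hS1 P 1 le_rfl hdim).exists_of_one
  have haw := mul_algebraMap_mem_map_of_forall_mem_iff hPw ha
  apply algebraMap_notMem_map_of_forall_mem_iff hPw
  rw [Ideal.map_bot, Ideal.mem_bot] at haw ⊢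
  exact (mul_left_mem_nonZeroDivisors_eq_zero_iff ha0).1 haw

theorem mem_nonZeroDivisors_of_forall_notMem_minimalPrimes (hS1 : SerreSCondition A 1) {a : A}
    (ha : ∀ P ∈ minimalPrimes A, a ∉ P) : a ∈ nonZeroDivisors A := by
  by_contra h
  rw [← SetLike.mem_coe, ← Set.mem_compl_iff,
    ← biUnion_associatedPrimes_eq_compl_nonZeroDivisors, Set.mem_iUnion₂] at h
  obtain ⟨P, hP, haP⟩ := h
  exact ha P (mem_minimalPrimes_of_isAssociatedPrime hS1 hP) haP

theorem exists_mem_nonZeroDivisors_map_eq {B : Type*} [CommRing B] (hS1 : SerreSCondition A 1)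
    (f : A →+* B) {a : A} (ha : f a ∈ nonZeroDivisors B) :
    ∃ a' ∈ nonZeroDivisors A, f a' = f a := by
  have hfin := minimalPrimes.finite_of_isNoetherianRing A
  have hker : ∀ P ∈ hfin.toFinset, RingHom.ker f ≤ P → a ∉ P := by
    intro P hP hkerP haP
    obtain ⟨u, hu, n, hun⟩ :=
      exists_notMem_mul_pow_eq_zero_of_mem_minimalPrimes (hfin.mem_toFinset.1 hP) haP
    refine hu (hkerP ((mul_right_mem_nonZeroDivisors_eq_zero_iff (pow_mem ha n)).1 ?_))
    rw [← map_pow, ← map_mul, hun, map_zero]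
  have hanti : IsAntichain (· ≤ ·) (hfin.toFinset : Set (Ideal A)) := by
    rw [hfin.coe_toFinset, minimalPrimes_eq_minimals]
    exact setOfPred_minimal_antichain _
  obtain ⟨l, hl, hal⟩ := Ideal.exists_mem_forall_add_notMem
    (fun P hP ↦ (hfin.mem_toFinset.1 hP).isPrime) hanti hker
  refine ⟨a + l, mem_nonZeroDivisors_of_forall_notMem_minimalPrimes hS1
    fun P hP ↦ hal P (hfin.mem_toFinset.2 hP), ?_⟩
  rw [map_add, RingHom.mem_ker.1 hl, add_zero]

end SerreS1

section Localization

variable {A B : Type*} [CommRing A] [IsNoetherianRing A] [CommRing B] [Algebra A B]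

theorem algebraMap_mul_mem_span_of_isIntegralFrac (M : Submonoid A) [IsLocalization M B]
    (hS1 : SerreSCondition A 1) (hWA : IsWeaklyArfRing A) {a b c : A}
    (ha : algebraMap A B a ∈ nonZeroDivisors B)
    (hb : IsIntegralFrac (algebraMap A B b) (algebraMap A B a))
    (hc : IsIntegralFrac (algebraMap A B c) (algebraMap A B a)) :
    algebraMap A B b * algebraMap A B c ∈ Ideal.span {algebraMap A B a} := by
  obtain ⟨a', ha', ha'a⟩ := exists_mem_nonZeroDivisors_map_eq hS1 (algebraMap A B) ha
  rw [← ha'a] at hb hc ⊢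
  obtain ⟨m, hm, hmb⟩ := hb.exists_mul_of_algebraMap M
  obtain ⟨n, hn, hnc⟩ := hc.exists_mul_of_algebraMap M
  have hmn : IsUnit (algebraMap A B m * algebraMap A B n) :=
    (IsLocalization.map_units B ⟨m, hm⟩).mul (IsLocalization.map_units B ⟨n, hn⟩)
  have := Ideal.mem_map_of_mem (algebraMap A B) (isWeaklyArfRing_iff.1 hWA a' ha' _ _ hmb hnc)
  rwa [Ideal.map_span, Set.image_singleton, map_mul, map_mul, map_mul, mul_mul_mul_comm,
    Ideal.unit_mul_mem_iff_mem _ hmn] at this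

theorem isWeaklyArfRing_of_isLocalization (M : Submonoid A) [IsLocalization M B]
    (hS1 : SerreSCondition A 1) (hWA : IsWeaklyArfRing A) : IsWeaklyArfRing B := by
  classical
  refine isWeaklyArfRing_iff.2 fun x hx y z hy hz ↦ ?_
  obtain ⟨σ, hσ⟩ := IsLocalization.exist_integer_multiples_of_finset M {x, y, z}
  obtain ⟨a, ha⟩ := hσ x (by simp)
  obtain ⟨b, hb⟩ := hσ y (by simp)
  obtain ⟨c, hc⟩ := hσ z (by simp)
  rw [Algebra.smul_def] at ha hb hc
  have hσ : IsUnit (algebraMap A B σ) := IsLocalization.map_units B σ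
  have key := algebraMap_mul_mem_span_of_isIntegralFrac M hS1 hWA (a := a) (b := b) (c := c)
    (by rw [ha]; exact mul_mem hσ.mem_nonZeroDivisors hx)
    (by rw [ha, hb]; exact hy.mul_mul _) (by rw [ha, hc]; exact hz.mul_mul _)
  rwa [ha, hb, hc, Ideal.span_singleton_mul_left_unit hσ, mul_mul_mul_comm,
    Ideal.unit_mul_mem_iff_mem _ (hσ.mul hσ)] at key

end Localization

/-- (a) If `A_P` is weakly Arf for every `P ∈ X₁(A)`, then `A` is weakly Arf.
(b) If `A` satisfies `(S₁)` and `A` is weakly Arf, then `S⁻¹A` is weakly Arf for every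
multiplicatively closed subset `S`; in particular every `A_P` is weakly Arf. -/
theorem weaklyArf_localization (A : Type*) [CommRing A] [IsNoetherianRing A] :
    ((∀ (P : Ideal A) [P.IsPrime], ¬ RingDepthGE (Localization.AtPrime P) 2 →
        IsWeaklyArfRing (Localization.AtPrime P)) →
      IsWeaklyArfRing A) ∧
    (SerreSCondition A 1 → IsWeaklyArfRing A →
      (∀ S : Submonoid A, IsWeaklyArfRing (Localization S)) ∧
      (∀ (P : Ideal A) [P.IsPrime], IsWeaklyArfRing (Localization.AtPrime P))) :=
  ⟨isWeaklyArfRing_of_forall_not_ringDepthGE_two, fun hS1 hWA ↦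
    ⟨fun S ↦ isWeaklyArfRing_of_isLocalization S hS1 hWA,
      fun P _ ↦ isWeaklyArfRing_of_isLocalization P.primeCompl hS1 hWA⟩⟩
end

section
/- Let A be a commutative ring. If the principal ideal aA is integrally closed in A for every a ∈ W(A), then A is integrally closed in Q(A), i.e., Ā = A. -/
open scoped TensorProduct

/-!
If `x = r / s` is integral over `A`, with `s` a non-zerodivisor, then clearing denominators in a
monic equation for `x` (i.e. passing to `p.scaleRoots s`) gives an equation
`r ^ n + c₁ r ^ (n - 1) + ⋯ + cₙ = 0` with `cᵢ ∈ s ^ i A`, so `r` lies in the integral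
closure of `s A`. If that ideal is integrally closed, `r = s t` for some `t ∈ A`, and `x = t`.
-/

open Polynomial

theorem memIdealIntegralClosure_of_monic {A : Type*} [CommRing A] {I : Ideal A} {a : A}
    {f : A[X]} (hf : f.Monic) (hcoeff : ∀ i < f.natDegree, f.coeff i ∈ I ^ (f.natDegree - i))
    (hroot : f.eval a = 0) : MemIdealIntegralClosure I a := by
  set n := f.natDegree
  rcases Nat.eq_zero_or_pos n with hn | hn
  · have : Subsingleton A := by
      rw [hf.natDegree_eq_zero.mp hn, eval_one] at hroot
      exact subsingleton_of_zero_eq_one hroot.symm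
    exact ⟨1, one_pos, 0, fun _ _ ↦ zero_mem _, Subsingleton.elim _ _⟩
  refine ⟨n, hn, fun i ↦ f.coeff (n - i), fun i hi ↦ ?_, ?_⟩
  · have hi := Finset.mem_Icc.mp hi
    simpa [Nat.sub_sub_self hi.2] using hcoeff (n - i) (by omega)
  · have hreflect : ∑ i ∈ Finset.Icc 1 n, f.coeff (n - i) * a ^ (n - i)
        = ∑ i ∈ Finset.range n, f.coeff i * a ^ i := by
      rw [← Finset.Ico_add_one_right_eq_Icc,
        Finset.sum_Ico_reflect (fun j ↦ f.coeff j * a ^ j) 1 le_rfl, Nat.sub_self,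
        Nat.add_sub_cancel, Nat.Ico_zero_eq_range]
    rw [hreflect, ← hroot, eval_eq_sum_range, Finset.sum_range_succ, hf.coeff_natDegree, one_mul,
      add_comm]

theorem memIdealIntegralClosure_span_singleton_of_isIntegral {A S : Type*} [CommRing A]
    [CommRing S] [Algebra A S] (hinj : Function.Injective (algebraMap A S)) {x : S}
    (hx : IsIntegral A x) {r s : A} (hrs : algebraMap A S r = algebraMap A S s * x) :
    MemIdealIntegralClosure (Ideal.span {s}) r := by
  obtain ⟨p, hp, hpx⟩ := hx
  refine memIdealIntegralClosure_of_monic ((monic_scaleRoots_iff s).mpr hp)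
    (fun i _ ↦ ?_) (hinj ?_)
  · rw [coeff_scaleRoots, natDegree_scaleRoots, Ideal.span_singleton_pow]
    exact Ideal.mem_span_singleton'.mpr ⟨_, rfl⟩
  · rw [map_zero, ← aeval_algebraMap_apply_eq_algebraMap_eval, hrs]
    exact scaleRoots_aeval_eq_zero (by rwa [aeval_def])

/-- If the principal ideal `a A` is integrally closed for every non-zerodivisor `a`,
then `A` is integrally closed in its total ring of fractions `Q(A)`. -/
theorem integrallyClosed_of_principal_integrallyClosed (A : Type*) [CommRing A]
    (h : ∀ a ∈ nonZeroDivisors A, Ideal.IsIntegrallyClosedIdeal (Ideal.span {a})) :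
    ∀ x : FractionRing A, IsIntegral A x →
      ∃ a : A, algebraMap A (FractionRing A) a = x := by
  intro x hx
  obtain ⟨⟨r, s⟩, rfl⟩ := IsLocalization.mk'_surjective (nonZeroDivisors A) x
  have hrs : algebraMap A (FractionRing A) r
      = algebraMap A (FractionRing A) s * IsLocalization.mk' _ r s :=
    (IsLocalization.mk'_spec' _ r s).symm
  have hr : r ∈ idealIntegralClosure (Ideal.span {(s : A)}) :=
    memIdealIntegralClosure_span_singleton_of_isIntegral (IsFractionRing.injective A _) hx hrs
  rw [h s s.2] at hr
  obtain ⟨t, rfl⟩ := Ideal.mem_span_singleton'.mp hr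
  exact ⟨t, (IsLocalization.mk'_mul_cancel_right t s).symm⟩
end

section
/- Let A be a commutative ring. Then A is a weakly Arf ring if and only if for every I ∈ Λ(A) the ring A^I is a weakly Arf ring, where A^I = ⋃_{n ≥ 0} (Iⁿ : Iⁿ) and Iⁿ : Iⁿ = {q ∈ Q(A) : q·Iⁿ ⊆ Iⁿ} is the endomorphism algebra of Iⁿ taken inside Q(A). -/
open scoped TensorProduct

/-- The set `A^I = ⋃_{n ≥ 0} (Iⁿ : Iⁿ)` inside `Q(A)`, where
`Iⁿ : Iⁿ = {q ∈ Q(A) : q · Iⁿ ⊆ Iⁿ}` and `Iⁿ` is viewed in `Q(A)`. -/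
def algebraAtIdealSet (A : Type*) [CommRing A] (I : Ideal A) : Set (FractionRing A) :=
  {q | ∃ n : ℕ, ∀ m ∈ Submodule.map (Algebra.linearMap A (FractionRing A)) (I ^ n),
    q * m ∈ Submodule.map (Algebra.linearMap A (FractionRing A)) (I ^ n)}

/-!
For a non-zerodivisor `x`, an element `a` lies in `\overline{(x)}` exactly when `a / x` is
integral over `A`: scale the roots of an equation of integral dependence by `x`. If `A` is weakly
Arf, this makes `J = \overline{(x)}` stable, `J² = xJ`, hence `J^{n+1} = x^n J` and `A^J = J / x`.
A non-zerodivisor `y / x` of `A^J` has `y` a non-zerodivisor of `A`, so it is a unit of `Q(A)`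
and `Q(A)` is also the total ring of fractions of `A^J`. For `b = y / x`, `f = u / x`,
`g = v / x` in `A^J`, the fractions `f / b = u / y` and `g / b = v / y` are integral over `A`,
so `uv = yc`, and then `fg = b · (c / x)` with `c / x = (u / y)(v / x)` integral, i.e. `c ∈ J`.
Conversely `A = \overline{(1)} ∈ Λ(A)` and `A^A = A`.
-/

open Polynomial

section IdealIntegralClosure

variable {A : Type*} [CommRing A]

theorem mem_idealIntegralClosure_of_mem {I : Ideal A} {a : A} (ha : a ∈ I) :
    a ∈ idealIntegralClosure I := by
  refine ⟨1, one_pos, fun _ => -a, fun i hi => ?_, by simp⟩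
  obtain rfl : i = 1 := by simpa using hi
  simpa using ha

theorem memIdealIntegralClosure_of_monic_s4 {I : Ideal A} {a : A} {p : A[X]} (hp : p.Monic)
    (hdeg : 0 < p.natDegree) (hcoeff : ∀ i, p.coeff i ∈ I ^ (p.natDegree - i))
    (hroot : p.eval a = 0) : MemIdealIntegralClosure I a := by
  set n := p.natDegree
  refine ⟨n, hdeg, fun i => p.coeff (n - i), fun i hi => ?_, ?_⟩
  · simpa [Nat.sub_sub_self (Finset.mem_Icc.mp hi).2] using hcoeff (n - i)
  · have reflect : ∑ i ∈ Finset.Icc 1 n, p.coeff (n - i) * a ^ (n - i)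
        = ∑ j ∈ Finset.range n, p.coeff j * a ^ j :=
      Finset.sum_nbij' (n - ·) (n - ·) (by intro i hi; simp at hi ⊢; omega)
        (by intro j hj; simp at hj ⊢; omega) (by intro i hi; simp at hi ⊢; omega)
        (by intro j hj; simp at hj ⊢; omega) (fun _ _ => rfl)
    rw [reflect, ← hroot, eval_eq_sum_range, Finset.sum_range_succ, hp.coeff_natDegree,
      one_mul, add_comm]

variable {K : Type*} [CommRing K] [Algebra A K] [IsFractionRing A K] {x a : A} {q : K}

theorem mem_idealIntegralClosure_span_singleton_of_isIntegral
    (hq : q * algebraMap A K x = algebraMap A K a) (h : IsIntegral A q) :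
    a ∈ idealIntegralClosure (Ideal.span {x}) := by
  nontriviality A using mem_idealIntegralClosure_of_mem, Subsingleton.elim a 0
  obtain ⟨p, hp, hpq⟩ := h
  -- multiplying by `X` makes the degree positive
  have hpX : (p * X).Monic := hp.mul monic_X
  refine memIdealIntegralClosure_of_monic_s4 ((monic_scaleRoots_iff x).mpr hpX) ?_ (fun i => ?_) ?_
  · rw [natDegree_scaleRoots, natDegree_mul_X hp.ne_zero]
    omega
  · rw [coeff_scaleRoots, natDegree_scaleRoots, Ideal.span_singleton_pow]
    exact Ideal.mul_mem_left _ _ (Ideal.mem_span_singleton_self _)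
  · apply IsFractionRing.injective A K
    rw [map_zero, ← eval₂_at_apply, ← hq, mul_comm, scaleRoots_eval₂_mul, eval₂_mul, hpq,
      zero_mul, mul_zero]

variable (hx : x ∈ nonZeroDivisors A)
include hx

theorem isIntegral_of_mem_idealIntegralClosure_span_singleton
    (hq : q * algebraMap A K x = algebraMap A K a)
    (h : a ∈ idealIntegralClosure (Ideal.span {x})) : IsIntegral A q := by
  obtain ⟨n, -, c, hc, hroot⟩ := h
  have hdvd : ∀ i ∈ Finset.Icc 1 n, x ^ i ∣ c i := fun i hi =>
    Ideal.mem_span_singleton.mp (Ideal.span_singleton_pow x i ▸ hc i hi)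
  choose! d hd using hdvd
  refine ⟨X ^ n + ∑ i ∈ Finset.Icc 1 n, C (d i) * X ^ (n - i), monic_X_pow_add ?_, ?_⟩
  · refine (degree_sum_le _ _).trans_lt <| (Finset.sup_lt_iff (WithBot.bot_lt_coe n)).mpr
      fun i hi => (degree_C_mul_X_pow_le _ _).trans_lt ?_
    obtain ⟨hi1, hin⟩ := Finset.mem_Icc.mp hi
    rw [Nat.cast_withBot]
    exact WithBot.coe_lt_coe.mpr (by omega)
  · -- `x ^ n` times the equation for `q` is the equation for `a = x q`
    have hxn := (IsLocalization.map_units K (⟨x, hx⟩ : nonZeroDivisors A)).pow n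
    refine hxn.mul_left_cancel ?_
    simp only [eval₂_add, eval₂_pow, eval₂_X, eval₂_finsetSum, eval₂_mul, eval₂_C, mul_add,
      Finset.mul_sum]
    rw [mul_zero, ← map_zero (algebraMap A K), ← hroot, map_add, map_sum, ← mul_pow, mul_comm,
      hq, map_pow]
    refine congrArg _ (Finset.sum_congr rfl fun i hi => ?_)
    rw [← pow_mul_pow_sub _ (Finset.mem_Icc.mp hi).2, hd i hi]
    calc algebraMap A K x ^ i * algebraMap A K x ^ (n - i) * (algebraMap A K (d i) * q ^ (n - i))
        = algebraMap A K (x ^ i * d i) * (q * algebraMap A K x) ^ (n - i) := by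
          rw [map_mul, map_pow]; ring
      _ = _ := by simp only [hq, map_mul, map_pow]

theorem mem_idealIntegralClosure_span_singleton_iff
    (hq : q * algebraMap A K x = algebraMap A K a) :
    a ∈ idealIntegralClosure (Ideal.span {x}) ↔ IsIntegral A q :=
  ⟨isIntegral_of_mem_idealIntegralClosure_span_singleton hx hq,
    mem_idealIntegralClosure_span_singleton_of_isIntegral hq⟩

theorem mem_iff_isIntegral_of_coe_eq_idealIntegralClosure {J : Ideal A}
    (hJ : (J : Set A) = idealIntegralClosure (Ideal.span {x}))
    (hq : q * algebraMap A K x = algebraMap A K a) : a ∈ J ↔ IsIntegral A q := by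
  rw [← SetLike.mem_coe, hJ]
  exact mem_idealIntegralClosure_span_singleton_iff hx hq

end IdealIntegralClosure

theorem isWeaklyArfRing_iff_of_isFractionRing {A : Type*} [CommRing A] (K : Type*) [CommRing K]
    [Algebra A K] [IsFractionRing A K] :
    IsWeaklyArfRing A ↔ ∀ x ∈ nonZeroDivisors A, ∀ (y z : A) (q r : K),
      q * algebraMap A K x = algebraMap A K y → r * algebraMap A K x = algebraMap A K z →
      IsIntegral A q → IsIntegral A r → y * z ∈ Ideal.span {x} := by
  let e := IsLocalization.algEquiv (nonZeroDivisors A) (FractionRing A) K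
  constructor
  · intro h x hx y z q r hq hr hqi hri
    have frac {p : K} {w : A} (hp : p * algebraMap A K x = algebraMap A K w) :
        IsLocalization.mk' (FractionRing A) w (⟨x, hx⟩ : nonZeroDivisors A) = e.symm p := by
      rw [IsLocalization.mk'_eq_iff_eq_mul, ← e.symm.commutes, ← e.symm.commutes, ← hp,
        map_mul]
    exact h x y z hx (frac hq ▸ hqi.map e.symm) (frac hr ▸ hri.map e.symm)
  · intro h x y z hx hy hz
    refine h x hx y z _ _ ?_ ?_ (hy.map e) (hz.map e) <;>
      rw [← e.commutes, ← map_mul, IsLocalization.mk'_spec, e.commutes]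

section StableIdeal

variable {A : Type*} [CommRing A] {x : A} {J : Ideal A}

theorem pow_succ_le_span_singleton_pow_mul (hJ : J * J ≤ Ideal.span {x} * J) (n : ℕ) :
    J ^ (n + 1) ≤ Ideal.span {x} ^ n * J := by
  induction n with
  | zero => simp
  | succ n ih =>
    calc J ^ (n + 2) = J ^ (n + 1) * J := pow_succ _ _
      _ ≤ Ideal.span {x} ^ n * J * J := Ideal.mul_mono_left ih
      _ ≤ Ideal.span {x} ^ n * (Ideal.span {x} * J) := by
          rw [mul_assoc]; exact Ideal.mul_mono_right hJ
      _ = Ideal.span {x} ^ (n + 1) * J := by rw [pow_succ, mul_assoc]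

variable (hx : x ∈ nonZeroDivisors A) (hxJ : x ∈ J) (hJ : J * J ≤ Ideal.span {x} * J)
include hx hxJ hJ

theorem algebraAtIdealSet_eq_of_mul_le :
    algebraAtIdealSet A J =
      {q | ∃ u ∈ J, q * algebraMap A (FractionRing A) x = algebraMap A (FractionRing A) u} := by
  have hxu : IsUnit (algebraMap A (FractionRing A) x) :=
    IsLocalization.map_units _ (⟨x, hx⟩ : nonZeroDivisors A)
  ext q
  constructor
  · rintro ⟨n, hn⟩
    obtain ⟨a, ha, hqa⟩ := hn _ (Submodule.mem_map_of_mem (Ideal.pow_mem_pow hxJ n))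
    have hax : a * x ∈ Ideal.span {x ^ n} * J := by
      rw [← Ideal.span_singleton_pow]
      exact pow_succ_le_span_singleton_pow_mul hJ n (pow_succ J n ▸ Ideal.mul_mem_mul ha hxJ)
    obtain ⟨u, hu, hxnu⟩ := Ideal.mem_span_singleton_mul.mp hax
    refine ⟨u, hu, (hxu.pow n).mul_left_cancel ?_⟩
    simp only [Algebra.linearMap_apply, map_pow] at hqa
    calc algebraMap A _ x ^ n * (q * algebraMap A _ x)
        = q * algebraMap A _ x ^ n * algebraMap A _ x := by ring
      _ = algebraMap A _ (x ^ n * u) := by rw [← hqa, hxnu, map_mul]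
      _ = _ := by rw [map_mul, map_pow]
  · rintro ⟨u, hu, hqu⟩
    refine ⟨1, fun m hm => ?_⟩
    rw [pow_one] at hm ⊢
    obtain ⟨v, hv, rfl⟩ := hm
    obtain ⟨w, hw, hxw⟩ := Ideal.mem_span_singleton_mul.mp (hJ (Ideal.mul_mem_mul hu hv))
    refine ⟨w, hw, hxu.mul_left_cancel ?_⟩
    simp only [Algebra.linearMap_apply]
    rw [← map_mul, hxw, map_mul, ← hqu]
    ring

variable {B : Subalgebra A (FractionRing A)}
  (hB : (B : Set (FractionRing A)) = algebraAtIdealSet A J)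
include hB

theorem mem_iff_of_coe_eq_algebraAtIdealSet {q : FractionRing A} :
    q ∈ B ↔ ∃ u ∈ J, q * algebraMap A _ x = algebraMap A _ u := by
  rw [← SetLike.mem_coe, hB, algebraAtIdealSet_eq_of_mul_le hx hxJ hJ]
  rfl

end StableIdeal

namespace Subalgebra

variable {A K : Type*} [CommRing A] [CommRing K] [Algebra A K] (B : Subalgebra A K)

theorem mem_nonZeroDivisors_of_isUnit {w : B} (hw : IsUnit (w : K)) : w ∈ nonZeroDivisors B :=
  mem_nonZeroDivisors_of_injective (f := B.val) Subtype.val_injective hw.mem_nonZeroDivisors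

variable [IsFractionRing A K]

theorem isFractionRing_of_isUnit (h : ∀ w ∈ nonZeroDivisors B, IsUnit (w : K)) :
    IsFractionRing B K := by
  refine (isLocalization_iff _ _).mpr
    ⟨fun w => h w w.2, fun z => ?_, fun hab => ⟨1, by rw [Subtype.ext hab]⟩⟩
  obtain ⟨⟨a, s⟩, hz⟩ := IsLocalization.surj (nonZeroDivisors A) z
  exact ⟨⟨algebraMap A B a,
    ⟨algebraMap A B s, B.mem_nonZeroDivisors_of_isUnit (IsLocalization.map_units K s)⟩⟩, hz⟩

variable {B} {x d : A} (hx : x ∈ nonZeroDivisors A) {w : B} (hw : w ∈ nonZeroDivisors B)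
  (hd : (w : K) * algebraMap A K x = algebraMap A K d)
include hx hw hd

theorem mem_nonZeroDivisors_of_mul_eq : d ∈ nonZeroDivisors A := by
  refine mem_nonZeroDivisors_iff_right.mpr fun a had => IsFractionRing.injective A K ?_
  have hzero : algebraMap A B a * w = 0 := Subtype.ext <|
    (IsLocalization.map_units K (⟨x, hx⟩ : nonZeroDivisors A)).mul_right_cancel <| by
      change algebraMap A K a * w * _ = 0 * _
      rw [mul_assoc, hd, ← map_mul, had, map_zero, zero_mul]
  rw [map_zero, IsScalarTower.algebraMap_apply A B K,
    mem_nonZeroDivisors_iff_right.mp hw _ hzero, map_zero]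

theorem isUnit_of_mul_eq : IsUnit (w : K) :=
  isUnit_of_mul_isUnit_left <| hd ▸ IsLocalization.map_units K
    (⟨d, mem_nonZeroDivisors_of_mul_eq hx hw hd⟩ : nonZeroDivisors A)

end Subalgebra

theorem isFractionRing_of_coe_eq_algebraAtIdealSet {A : Type*} [CommRing A] {x : A}
    (hx : x ∈ nonZeroDivisors A) {J : Ideal A} (hxJ : x ∈ J) (hJ : J * J ≤ Ideal.span {x} * J)
    {B : Subalgebra A (FractionRing A)} (hB : (B : Set (FractionRing A)) = algebraAtIdealSet A J) :
    IsFractionRing B (FractionRing A) :=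
  B.isFractionRing_of_isUnit fun w hw => by
    obtain ⟨d, -, hd⟩ := (mem_iff_of_coe_eq_algebraAtIdealSet hx hxJ hJ hB).mp w.2
    exact Subalgebra.isUnit_of_mul_eq hx hw hd

theorem top_mem_lambdaSet (A : Type*) [CommRing A] : ⊤ ∈ LambdaSet A :=
  ⟨1, one_mem _, by
    ext a
    simpa using mem_idealIntegralClosure_of_mem (Ideal.mem_span_singleton.mpr (one_dvd a))⟩

theorem algebraAtIdealSet_top (A : Type*) [CommRing A] :
    algebraAtIdealSet A ⊤ = ((⊥ : Subalgebra A (FractionRing A)) : Set (FractionRing A)) := by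
  rw [algebraAtIdealSet_eq_of_mul_le (one_mem _) (Submodule.mem_top (x := 1)) (by simp)]
  ext q
  simp [eq_comm]

namespace IsWeaklyArfRing

variable {A : Type*} [CommRing A]

theorem mul_self_le_span_singleton_mul (hA : IsWeaklyArfRing A) {x : A}
    (hx : x ∈ nonZeroDivisors A) {J : Ideal A}
    (hJ : (J : Set A) = idealIntegralClosure (Ideal.span {x})) :
    J * J ≤ Ideal.span {x} * J := by
  refine Submodule.mul_le.mpr fun u hu v hv => ?_
  set qu := IsLocalization.mk' (FractionRing A) u (⟨x, hx⟩ : nonZeroDivisors A)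
  set qv := IsLocalization.mk' (FractionRing A) v (⟨x, hx⟩ : nonZeroDivisors A)
  have hqu : qu * algebraMap A _ x = algebraMap A _ u := IsLocalization.mk'_spec _ _ _
  have hqv : qv * algebraMap A _ x = algebraMap A _ v := IsLocalization.mk'_spec _ _ _
  rw [mem_iff_isIntegral_of_coe_eq_idealIntegralClosure hx hJ hqu] at hu
  rw [mem_iff_isIntegral_of_coe_eq_idealIntegralClosure hx hJ hqv] at hv
  obtain ⟨w, hw⟩ := Ideal.mem_span_singleton'.mp (hA x u v hx hu hv)
  refine Ideal.mem_span_singleton_mul.mpr ⟨w, ?_, by rw [mul_comm, hw]⟩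
  refine (mem_iff_isIntegral_of_coe_eq_idealIntegralClosure hx hJ ?_).mpr (hu.mul hv)
  refine (IsLocalization.map_units _ (⟨x, hx⟩ : nonZeroDivisors A)).mul_left_cancel ?_
  calc algebraMap A _ x * (qu * qv * algebraMap A _ x)
      = (qu * algebraMap A _ x) * (qv * algebraMap A _ x) := by ring
    _ = algebraMap A _ x * algebraMap A _ w := by
        rw [hqu, hqv, ← map_mul, ← hw, map_mul, mul_comm]

theorem of_coe_eq_algebraAtIdealSet (hA : IsWeaklyArfRing A) {x : A}
    (hx : x ∈ nonZeroDivisors A) {J : Ideal A}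
    (hJ : (J : Set A) = idealIntegralClosure (Ideal.span {x}))
    {B : Subalgebra A (FractionRing A)} (hB : (B : Set (FractionRing A)) = algebraAtIdealSet A J) :
    IsWeaklyArfRing B := by
  have hxJ : x ∈ J := by
    rw [← SetLike.mem_coe, hJ]
    exact mem_idealIntegralClosure_of_mem (Ideal.mem_span_singleton_self x)
  have hstable := hA.mul_self_le_span_singleton_mul hx hJ
  have hmemB (q) := mem_iff_of_coe_eq_algebraAtIdealSet (q := q) hx hxJ hstable hB
  have hmemJ {a : A} {q : FractionRing A} :=
    mem_iff_isIntegral_of_coe_eq_idealIntegralClosure (a := a) (q := q) hx hJ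
  have : Algebra.IsIntegral A B := ⟨fun q => by
    obtain ⟨u, hu, hqu⟩ := (hmemB q).mp q.2
    exact (isIntegral_algHom_iff B.val Subtype.val_injective).mp ((hmemJ hqu).mp hu)⟩
  have := isFractionRing_of_coe_eq_algebraAtIdealSet hx hxJ hstable hB
  rw [isWeaklyArfRing_iff_of_isFractionRing (FractionRing A)] at hA ⊢
  intro b hb f g q r hqb hrb hqi hri
  obtain ⟨y, -, hy⟩ := (hmemB b).mp b.2
  obtain ⟨u, -, hu⟩ := (hmemB f).mp f.2
  obtain ⟨v, -, hv⟩ := (hmemB g).mp g.2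
  have hyW := Subalgebra.mem_nonZeroDivisors_of_mul_eq hx hb hy
  have hquot {p : FractionRing A} {h : B} {w : A} (hph : p * b = h)
      (hw : (h : FractionRing A) * algebraMap A _ x = algebraMap A _ w) :
      p * algebraMap A _ y = algebraMap A _ w := by
    rw [← hy, ← mul_assoc, hph, hw]
  obtain ⟨c, hc⟩ := Ideal.mem_span_singleton'.mp (hA y hyW u v q r (hquot hqb hu)
    (hquot hrb hv) (isIntegral_trans q hqi) (isIntegral_trans r hri))
  have hqgc : q * g * algebraMap A _ x = algebraMap A _ c := by
    refine (IsLocalization.map_units _ (⟨y, hyW⟩ : nonZeroDivisors A)).mul_left_cancel ?_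
    calc algebraMap A _ y * (q * g * algebraMap A _ x)
        = (q * algebraMap A _ y) * (g * algebraMap A _ x) := by ring
      _ = algebraMap A _ y * algebraMap A _ c := by
          rw [hquot hqb hu, hv, ← map_mul, ← hc, map_mul, mul_comm]
  have hqg : q * g ∈ B := (hmemB _).mpr ⟨c, (hmemJ hqgc).mpr ((isIntegral_trans q hqi).mul
    ((isIntegral_algHom_iff B.val Subtype.val_injective).mpr (Algebra.IsIntegral.isIntegral g))),
    hqgc⟩
  refine Ideal.mem_span_singleton'.mpr ⟨⟨q * g, hqg⟩, Subtype.ext ?_⟩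
  change q * g * b = f * g
  rw [mul_right_comm]
  exact congrArg (· * (g : FractionRing A)) hqb

theorem of_bot (h : IsWeaklyArfRing (⊥ : Subalgebra A (FractionRing A))) : IsWeaklyArfRing A := by
  have := isFractionRing_of_coe_eq_algebraAtIdealSet (one_mem _) (Submodule.mem_top (x := 1))
    (by simp) (algebraAtIdealSet_top A).symm
  rw [isWeaklyArfRing_iff_of_isFractionRing (FractionRing A)] at h ⊢
  intro x hx y z q r hq hr hqi hri
  have hx' : algebraMap A (⊥ : Subalgebra A (FractionRing A)) x ∈ nonZeroDivisors _ :=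
    Subalgebra.mem_nonZeroDivisors_of_isUnit _
      (IsLocalization.map_units _ (⟨x, hx⟩ : nonZeroDivisors A))
  obtain ⟨c, hc⟩ := Ideal.mem_span_singleton'.mp
    (h _ hx' (algebraMap A _ y) (algebraMap A _ z) q r hq hr hqi.tower_top hri.tower_top)
  obtain ⟨a, ha⟩ := Algebra.mem_bot.mp c.2
  refine Ideal.mem_span_singleton'.mpr ⟨a, IsFractionRing.injective A (FractionRing A) ?_⟩
  simpa [← ha] using congrArg Subtype.val hc

end IsWeaklyArfRing

/-- `A` is weakly Arf iff for every `I ∈ Λ(A)` the ring `A^I = ⋃_{n ≥ 0} (Iⁿ : Iⁿ)`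
is weakly Arf. -/
theorem weaklyArf_iff_algebraAtIdeal_weaklyArf (A : Type*) [CommRing A] :
    IsWeaklyArfRing A ↔
      ∀ I ∈ LambdaSet A, ∀ B : Subalgebra A (FractionRing A),
        (B : Set (FractionRing A)) = algebraAtIdealSet A I → IsWeaklyArfRing B :=
  ⟨fun hA _ ⟨_, hx, hI⟩ _ hB => hA.of_coe_eq_algebraAtIdealSet hx hI hB,
    fun h => .of_bot (h ⊤ (top_mem_lambdaSet A) ⊥ (algebraAtIdealSet_top A).symm)⟩
end

section
/- Let φ : A → B be a homomorphism of commutative rings such that for every a ∈ W(A), φ(a) ∈ W(B) and φ⁻¹(φ(a)B) = aA (i.e., aB ∩ A = (a)). If B is a weakly Arf ring, then so is A. -/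
open scoped TensorProduct

/-- If `φ : A → B` sends non-zerodivisors to non-zerodivisors and
`a B ∩ A = (a)` (i.e. `φ⁻¹(φ(a) B) = a A`) for every `a ∈ W(A)`, and `B` is weakly Arf,
then `A` is weakly Arf. -/
theorem weaklyArf_of_ringHom (A B : Type*) [CommRing A] [CommRing B] (φ : A →+* B)
    (h1 : ∀ a ∈ nonZeroDivisors A, φ a ∈ nonZeroDivisors B)
    (h2 : ∀ a ∈ nonZeroDivisors A,
      Ideal.comap φ (Ideal.span {φ a}) = Ideal.span {a})
    (hB : IsWeaklyArfRing B) : IsWeaklyArfRing A := by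
  intro x y z hx hy hz
  have hle : nonZeroDivisors A ≤ (nonZeroDivisors B).comap φ.toMonoidHom := by
    intro a ha; exact h1 a ha
  let g : FractionRing A →+* FractionRing B :=
    IsLocalization.map (FractionRing B) φ hle
  have hcomp : g.comp (algebraMap A (FractionRing A))
      = (algebraMap B (FractionRing B)).comp φ :=
    IsLocalization.map_comp hle
  have hmap : ∀ (w : A), g (IsLocalization.mk' (FractionRing A) w
      (⟨x, hx⟩ : nonZeroDivisors A))
      = IsLocalization.mk' (FractionRing B) (φ w) (⟨φ x, h1 x hx⟩ : nonZeroDivisors B) := by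
    intro w
    exact IsLocalization.map_mk' (S := FractionRing A) (Q := FractionRing B) hle w _
  have hint : ∀ (q : FractionRing A), IsIntegral A q → IsIntegral B (g q) := by
    intro q ⟨p, hmonic, hev⟩
    refine ⟨p.map φ, hmonic.map φ, ?_⟩
    have := congrArg g hev
    rw [Polynomial.hom_eval₂] at this
    rw [Polynomial.eval₂_map, ← hcomp]
    simpa using this
  have hyz := hB (φ x) (φ y) (φ z) (h1 x hx)
    (by rw [← hmap y]; exact hint _ hy) (by rw [← hmap z]; exact hint _ hz)
  have : y * z ∈ Ideal.comap φ (Ideal.span {φ x}) := by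
    simpa [Ideal.mem_comap, map_mul] using hyz
  rwa [h2 x hx] at this
end

section
/- Let A be an integral domain and let G be a finite subgroup of the group of ring automorphisms of A such that the order of G is invertible in A. If A is a weakly Arf ring, then the invariant subring A^G = {a ∈ A : σ(a) = a for all σ ∈ G} is a weakly Arf ring. -/
open scoped TensorProduct

/-- The invariant subring `A^G = {a ∈ A : σ a = a for all σ ∈ G}` of `A` under a
subgroup `G` of the ring automorphisms of `A`. -/
def invariantSubring {A : Type*} [CommRing A] (G : Subgroup (A ≃+* A)) : Subring A where
  carrier := {a | ∀ σ ∈ G, σ a = a}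
  mul_mem' := by
    intro a b ha hb σ hσ
    simp only [map_mul, ha σ hσ, hb σ hσ]
  one_mem' := by intro σ _; simp
  add_mem' := by
    intro a b ha hb σ hσ
    simp only [map_add, ha σ hσ, hb σ hσ]
  zero_mem' := by intro σ _; simp
  neg_mem' := by
    intro a ha σ hσ
    simp only [map_neg, ha σ hσ]

/-- Let `A` be a weakly Arf integral domain and `G` a finite subgroup of the ring
automorphisms of `A` whose order is invertible in `A`.  Then the invariant subring
`A^G` is weakly Arf. -/
theorem weaklyArf_invariantSubring (A : Type*) [CommRing A] [IsDomain A]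
    (G : Subgroup (A ≃+* A)) [Finite G] (hord : IsUnit ((Nat.card G : A)))
    (hA : IsWeaklyArfRing A) : IsWeaklyArfRing (invariantSubring G) := by

  intro x y z hx hy hz
  have hx0 : (x : A) ≠ 0 := fun h =>
    (mem_nonZeroDivisors_iff_ne_zero.mp hx) (Subtype.ext h)
  have hxA : (x : A) ∈ nonZeroDivisors A := mem_nonZeroDivisors_iff_ne_zero.mpr hx0
  let R := invariantSubring G
  let K := FractionRing R
  let L := FractionRing A
  let g : R →+* L := (algebraMap A L).comp R.subtype
  have hginj : Function.Injective g :=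
    (IsFractionRing.injective A L).comp Subtype.val_injective
  have hg : ∀ s : nonZeroDivisors R, IsUnit (g s) := by
    intro s
    rw [isUnit_iff_ne_zero]
    intro h
    have h0 : (s : R) = 0 := hginj (by simpa using h)
    exact (mem_nonZeroDivisors_iff_ne_zero.mp s.2) h0
  let φ : K →+* L := IsLocalization.lift hg
  have hφcomp : ∀ r : R, φ (algebraMap R K r) = g r := fun r => IsLocalization.lift_eq hg r
  have hkey : ∀ (w : R), φ (IsLocalization.mk' K w (⟨x, hx⟩ : nonZeroDivisors R))
      = IsLocalization.mk' L (w : A) (⟨(x : A), hxA⟩ : nonZeroDivisors A) := by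
    intro w
    have halgx : algebraMap A L (x : A) ≠ 0 := fun h =>
      hx0 (IsFractionRing.injective A L (by simpa using h))
    apply mul_right_cancel₀ halgx
    have h1 : φ (IsLocalization.mk' K w (⟨x, hx⟩ : nonZeroDivisors R)) * algebraMap A L (x : A)
        = φ (IsLocalization.mk' K w (⟨x, hx⟩ : nonZeroDivisors R) * algebraMap R K x) := by
      rw [map_mul, hφcomp]
      rfl
    rw [h1, IsLocalization.mk'_spec, IsLocalization.mk'_spec, hφcomp]
    rfl
  have hint : ∀ (w : R), IsIntegral R (IsLocalization.mk' K w (⟨x, hx⟩ : nonZeroDivisors R)) →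
      IsIntegral A (IsLocalization.mk' L (w : A) (⟨(x : A), hxA⟩ : nonZeroDivisors A)) := by
    intro w hw
    obtain ⟨p, hpm, hpe⟩ := hw
    refine ⟨p.map R.subtype, hpm.map _, ?_⟩
    rw [← hkey w]
    have hcomp : (algebraMap A L).comp R.subtype = φ.comp (algebraMap R K) := by
      ext r
      rw [RingHom.comp_apply, RingHom.comp_apply, hφcomp]
      rfl
    rw [Polynomial.eval₂_map, hcomp, ← Polynomial.hom_eval₂, hpe, map_zero]
  have hmem := hA (x : A) (y : A) (z : A) hxA (hint y hy) (hint z hz)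
  rw [Ideal.mem_span_singleton] at hmem ⊢
  obtain ⟨a, ha⟩ := hmem
  have hainv : ∀ σ ∈ G, σ a = a := by
    intro σ hσ
    apply mul_left_cancel₀ hx0
    have hxinv : σ (x : A) = (x : A) := x.2 σ hσ
    have h2 : σ ((x : A) * a) = (x : A) * σ a := by
      rw [map_mul, hxinv]
    have hyinv : σ (y : A) = (y : A) := y.2 σ hσ
    have hzinv : σ (z : A) = (z : A) := z.2 σ hσ
    rw [← h2, ← ha, map_mul, hyinv, hzinv, ha]
  refine ⟨⟨a, hainv⟩, Subtype.ext ?_⟩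
  push_cast
  exact ha
end

section
/- Let (A, m) be an Artinian local ring and let B = A[X] be the polynomial ring in one variable over A. Then B is a weakly Arf ring if and only if m² = (0). In particular, if m² ≠ (0), then A is weakly Arf but the polynomial ring A[X] is not. -/
open scoped TensorProduct

/-!
If `m² = 0`, reduction modulo `m` maps `A[X]` onto the integrally closed domain `κ[X]` with a
square-zero kernel `m[X]`. Integrality of `y/x` survives this reduction, so `x ∣ y` modulo
`m[X]`; writing `y = xq + r` and `z = xq' + r'` with `r, r' ∈ m[X]` gives `rr' = 0`, hence
`x ∣ yz`. Conversely, for nilpotent `a, b ∈ A` the fractions `a/X` and `b/X` are nilpotent,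
hence integral, so weak Arfness of `A[X]` forces `X ∣ ab`, i.e. `ab = 0`; in an Artinian local
ring every element of `m` is nilpotent. An Artinian ring is weakly Arf because its
non-zerodivisors are units.
-/

open Polynomial IsLocalRing IsLocalization
open scoped nonZeroDivisors

theorem IsWeaklyArfRing.of_isArtinianRing (R : Type*) [CommRing R] [IsArtinianRing R] :
    IsWeaklyArfRing R := fun _ _ _ hx _ _ =>
  Ideal.span_singleton_eq_top.mpr (IsArtinianRing.isUnit_of_mem_nonZeroDivisors hx) ▸
    Submodule.mem_top

theorem IsNilpotent.isIntegral {R B : Type*} [CommRing R] [Ring B] [Algebra R B] {b : B}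
    (hb : IsNilpotent b) : IsIntegral R b := by
  obtain ⟨n, hn⟩ := hb
  exact ⟨X ^ n, monic_X_pow n, by simp [hn]⟩

theorem isIntegral_mk'_of_isNilpotent {R : Type*} [CommRing R] {y : R} (hy : IsNilpotent y)
    (x : R⁰) : IsIntegral R (mk' (FractionRing R) y x) := by
  rw [mk'_eq_mul_mk'_one]
  exact IsNilpotent.isIntegral <|
    (Commute.all _ _).isNilpotent_mul_right (hy.map (algebraMap R (FractionRing R)))

theorem IsWeaklyArfRing.mul_eq_zero_of_isNilpotent {R : Type*} [CommRing R]
    (h : IsWeaklyArfRing R[X]) {a b : R} (ha : IsNilpotent a) (hb : IsNilpotent b) :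
    a * b = 0 := by
  have hX : (X : R[X]) ∈ R[X]⁰ := monic_X.mem_nonZeroDivisors
  have hdvd := h X (C a) (C b) hX (isIntegral_mk'_of_isNilpotent (ha.map C) _)
    (isIntegral_mk'_of_isNilpotent (hb.map C) _)
  simpa using X_dvd_iff.mp (Ideal.mem_span_singleton.mp hdvd)

theorem Ideal.mul_eq_zero_of_sq_eq_bot {R : Type*} [CommRing R] {J : Ideal R} (hJ : J ^ 2 = ⊥)
    {a b : R} (ha : a ∈ J) (hb : b ∈ J) : a * b = 0 := by
  simpa [← sq, hJ] using Ideal.mul_mem_mul ha hb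

theorem notMem_of_mem_nonZeroDivisors_of_sq_eq_bot {R : Type*} [CommRing R] [Nontrivial R]
    {J : Ideal R} (hJ : J ^ 2 = ⊥) {x : R} (hx : x ∈ R⁰) : x ∉ J := by
  intro hxJ
  have hx0 : x = 0 :=
    mem_nonZeroDivisors_iff_right.mp hx x (J.mul_eq_zero_of_sq_eq_bot hJ hxJ hxJ)
  exact zero_notMem_nonZeroDivisors (hx0 ▸ hx)

theorem map_dvd_map_of_isIntegral_mk' {R S : Type*} [CommRing R] [CommRing S] [IsDomain S]
    [IsIntegrallyClosed S] (φ : R →+* S) (hφ : R⁰ ≤ S⁰.comap φ)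
    {x y : R} (hx : x ∈ R⁰)
    (hy : IsIntegral R (mk' (FractionRing R) y (⟨x, hx⟩ : R⁰))) :
    φ x ∣ φ y := by
  set ψ := IsLocalization.map (FractionRing S) φ hφ (S := FractionRing R)
  have hint := hy.map_of_comp_eq φ ψ (IsLocalization.map_comp hφ).symm
  rw [map_mk'] at hint
  obtain ⟨s, hs⟩ := IsIntegrallyClosed.isIntegral_iff.mp hint
  refine ⟨s, IsFractionRing.injective S (FractionRing S) ?_⟩
  rw [eq_comm, mk'_eq_iff_eq_mul] at hs
  rw [hs, map_mul, mul_comm]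

theorem IsWeaklyArfRing.of_surjective {R S : Type*} [CommRing R] [CommRing S] [IsDomain S]
    [IsIntegrallyClosed S] (φ : R →+* S) (hφ : Function.Surjective φ)
    (hker : RingHom.ker φ ^ 2 = ⊥) : IsWeaklyArfRing R := by
  have := φ.domain_nontrivial
  have hφR : R⁰ ≤ S⁰.comap φ := fun x hx =>
    mem_nonZeroDivisors_of_ne_zero fun h =>
      notMem_of_mem_nonZeroDivisors_of_sq_eq_bot hker hx (RingHom.mem_ker.mpr h)
  have hdvd : ∀ {x y : R} (hx : x ∈ R⁰),
      IsIntegral R (mk' (FractionRing R) y (⟨x, hx⟩ : R⁰)) →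
      ∃ q, y - x * q ∈ RingHom.ker φ := by
    intro x y hx hy
    obtain ⟨s, hs⟩ := map_dvd_map_of_isIntegral_mk' φ hφR hx hy
    obtain ⟨q, rfl⟩ := hφ s
    exact ⟨q, by simp [hs]⟩
  intro x y z hx hy hz
  obtain ⟨q, hq⟩ := hdvd hx hy
  obtain ⟨q', hq'⟩ := hdvd hx hz
  have hrr' : (y - x * q) * (z - x * q') = 0 := Ideal.mul_eq_zero_of_sq_eq_bot hker hq hq'
  refine Ideal.mem_span_singleton'.mpr ⟨q * z + q' * y - x * q * q', ?_⟩
  linear_combination -hrr'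

theorem IsWeaklyArfRing.sq_eq_bot_of_le_nilradical {R : Type*} [CommRing R]
    (h : IsWeaklyArfRing R[X]) {I : Ideal R} (hI : I ≤ nilradical R) : I ^ 2 = ⊥ := by
  rw [sq, ← le_bot_iff]
  exact Ideal.mul_le.mpr fun a ha b hb => (Ideal.mem_bot).mpr <|
    h.mul_eq_zero_of_isNilpotent (mem_nilradical.mp (hI ha)) (mem_nilradical.mp (hI hb))

theorem IsWeaklyArfRing.polynomial_of_maximalIdeal_sq_eq_bot {A : Type*} [CommRing A]
    [IsLocalRing A] (h : maximalIdeal A ^ 2 = ⊥) : IsWeaklyArfRing A[X] := by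
  refine .of_surjective (mapRingHom (residue A)) (map_surjective _ residue_surjective) ?_
  rw [ker_mapRingHom, ker_residue, ← Ideal.map_pow, h, Ideal.map_bot]

/-- For an Artinian local ring `(A, m)`, the polynomial ring `A[X]` is weakly Arf iff
`m² = (0)`.  In particular, if `m² ≠ (0)`, then `A` is weakly Arf but `A[X]` is not. -/
theorem weaklyArf_polynomial_artinian (A : Type*) [CommRing A] [IsArtinianRing A]
    [IsLocalRing A] :
    (IsWeaklyArfRing (Polynomial A) ↔ IsLocalRing.maximalIdeal A ^ 2 = ⊥) ∧
    (IsLocalRing.maximalIdeal A ^ 2 ≠ ⊥ →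
      IsWeaklyArfRing A ∧ ¬ IsWeaklyArfRing (Polynomial A)) := by
  have main : IsWeaklyArfRing A[X] ↔ maximalIdeal A ^ 2 = ⊥ :=
    ⟨fun h => h.sq_eq_bot_of_le_nilradical fun _ ha =>
        mem_nilradical.mpr (Ring.KrullDimLE.isNilpotent_iff_mem_maximalIdeal.mpr ha),
      .polynomial_of_maximalIdeal_sq_eq_bot⟩
  exact ⟨main, fun hne => ⟨.of_isArtinianRing A, fun h => hne (main.mp h)⟩⟩
end

section
/- Let (R, m) and (S, n) be Noetherian local rings, let k be a field, and let f : R → k and g : S → k be surjective ring homomorphisms with kernels m and n respectively (so k is a common residue field of R and S). Suppose depth R > 0 and depth S > 0. Then the fiber product A = R ×_k S = {(a, b) ∈ R × S : f(a) = g(b)} is a weakly Arf ring if and only if both R and S are weakly Arf rings. -/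
/-! The depth hypotheses give non-zerodivisors `a ∈ 𝔪_R` and `b ∈ 𝔪_S`, so `(a, 0)` and `(0, b)`
lie in `A = R ×_k S`. Hence the non-zerodivisors of `A` are those of `R × S` lying in `A`,
`Q(A)` embeds in `Q(R) × Q(S)`, and, as `A` surjects onto `R` and `S`, a fraction `y / x` is
integral over `A` iff its components are integral over `R` and `S`. If `A` is weakly Arf and
`x ∈ 𝔪_R`, the elements `(x, b)`, `(y, 0)`, `(z, 0)` of `A` carry the condition down to `R`.
Conversely, from `y₁ z₁ = r x₁` and `y₂ z₂ = s x₂` the pair `(r, s)` lies in `A`, since an integral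
fraction `r / x` with `x ∈ 𝔪` forces `r ∈ 𝔪`: were `r` a unit, `x / r ∈ R` would be the inverse of
an integral element, hence a unit. -/

open scoped TensorProduct

open IsLocalRing nonZeroDivisors

theorem RingDepthGE.exists_mem_maximalIdeal_mem_nonZeroDivisors {R : Type*} [CommRing R]
    [IsLocalRing R] (h : RingDepthGE R 1) : ∃ a ∈ maximalIdeal R, a ∈ R⁰ := by
  obtain ⟨xs, hlen, hm, hreg⟩ := h
  have h0 : 0 < xs.length := by omega
  refine ⟨_, hm _ (xs.get_mem ⟨0, h0⟩), mem_nonZeroDivisors_iff_right.2 fun z hz => ?_⟩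
  have hz0 := @hreg 0 h0 (Ideal.Quotient.mk _ z) 0 (by
    simp only [Algebra.smul_def, Ideal.Quotient.algebraMap_eq, ← map_mul, mul_comm _ z, hz,
      map_zero, mul_zero])
  rw [Ideal.Quotient.eq_zero_iff_mem] at hz0
  simpa using hz0

theorem isUnit_of_isIntegral_of_algebraMap_mul_eq_one {R K : Type*} [CommRing R] [CommRing K]
    [Algebra R K] [FaithfulSMul R K] {t : R} {γ : K} (hγ : IsIntegral R γ)
    (h : algebraMap R K t * γ = 1) : IsUnit t := by
  have : IsLocalHom (algebraMap R (integralClosure R K)) :=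
    RingHom.IsIntegral.isLocalHom (fun x => integralClosure.isIntegral x)
      fun x y hxy => FaithfulSMul.algebraMap_injective R K congr(($hxy).val)
  exact isUnit_of_map_unit (algebraMap R (integralClosure R K)) t
    (.of_mul_eq_one (⟨γ, hγ⟩ : integralClosure R K) (Subtype.ext h))

section LocalRing

variable {R : Type*} [CommRing R] [IsLocalRing R]

theorem mem_maximalIdeal_of_isIntegral_mk' {x y : R} (hx : x ∈ R⁰) (hxm : x ∈ maximalIdeal R)
    (h : IsIntegral R (IsLocalization.mk' (FractionRing R) y ⟨x, hx⟩)) : y ∈ maximalIdeal R := by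
  by_contra hy
  obtain ⟨u, hu⟩ := (notMem_maximalIdeal.1 hy).exists_right_inv
  refine notMem_maximalIdeal.2 (isUnit_of_mul_isUnit_left (y := u)
    (isUnit_of_isIntegral_of_algebraMap_mul_eq_one h ?_)) hxm
  rw [map_mul, mul_comm, ← mul_assoc, IsLocalization.mk'_spec, ← map_mul, hu, map_one]

theorem mem_maximalIdeal_of_mul_eq_mul {x y z r : R} (hx : x ∈ R⁰) (hxm : x ∈ maximalIdeal R)
    (hy : IsIntegral R (IsLocalization.mk' (FractionRing R) y ⟨x, hx⟩))
    (hz : IsIntegral R (IsLocalization.mk' (FractionRing R) z ⟨x, hx⟩)) (h : r * x = y * z) :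
    r ∈ maximalIdeal R := by
  refine mem_maximalIdeal_of_isIntegral_mk' hx hxm ?_
  rw [← IsLocalization.mk'_cancel _ _ ⟨x, hx⟩, h, IsLocalization.mk'_mul]
  exact hy.mul hz

end LocalRing

theorem RingHom.isIntegralElem_prod_iff {A T₁ T₂ : Type*} [CommRing A] [CommRing T₁]
    [CommRing T₂] (φ₁ : A →+* T₁) (φ₂ : A →+* T₂) {x : T₁ × T₂} :
    (φ₁.prod φ₂).IsIntegralElem x ↔ φ₁.IsIntegralElem x.1 ∧ φ₂.IsIntegralElem x.2 :=
  letI := φ₁.toAlgebra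
  letI := φ₂.toAlgebra
  IsIntegral.pair_iff (R := A) (x := x)

open Polynomial in
theorem RingHom.isIntegralElem_comp_iff_of_surjective {A R T : Type*} [CommRing A] [CommRing R]
    [Ring T] {π : A →+* R} (hπ : Function.Surjective π) (φ : R →+* T) {x : T} :
    (φ.comp π).IsIntegralElem x ↔ φ.IsIntegralElem x := by
  refine ⟨RingHom.IsIntegralElem.of_comp, fun ⟨p, hp, hpx⟩ => ?_⟩
  obtain ⟨q, hqp, -, hq⟩ := lifts_and_natDegree_eq_and_monic (map_surjective π hπ p) hp
  exact ⟨q, hq, by rwa [← eval₂_map, hqp]⟩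

section SubdirectProduct

variable {A R S : Type*} [CommRing A] [CommRing R] [CommRing S] {π₁ : A →+* R} {π₂ : A →+* S}

variable (π₁ π₂) in
structure IsSubdirectProduct : Prop where
  ker_inf_ker_eq_bot : RingHom.ker π₁ ⊓ RingHom.ker π₂ = ⊥
  surjective_fst : Function.Surjective π₁
  surjective_snd : Function.Surjective π₂

theorem IsSubdirectProduct.symm (h : IsSubdirectProduct π₁ π₂) : IsSubdirectProduct π₂ π₁ :=
  ⟨inf_comm (RingHom.ker π₁) _ ▸ h.ker_inf_ker_eq_bot, h.surjective_snd, h.surjective_fst⟩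

theorem eq_zero_of_ker_inf_ker_eq_bot (h : RingHom.ker π₁ ⊓ RingHom.ker π₂ = ⊥) {u : A}
    (h₁ : π₁ u = 0) (h₂ : π₂ u = 0) : u = 0 := by
  rw [← Ideal.mem_bot, ← h]
  exact ⟨h₁, h₂⟩

theorem mem_nonZeroDivisors_of_ker_inf_ker_eq_bot (h : RingHom.ker π₁ ⊓ RingHom.ker π₂ = ⊥)
    {u : A} (h₁ : π₁ u ∈ R⁰) (h₂ : π₂ u ∈ S⁰) : u ∈ A⁰ :=
  mem_nonZeroDivisors_iff_right.2 fun c hc => eq_zero_of_ker_inf_ker_eq_bot h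
    ((mul_right_mem_nonZeroDivisors_eq_zero_iff h₁).1 (by rw [← map_mul, hc, map_zero]))
    ((mul_right_mem_nonZeroDivisors_eq_zero_iff h₂).1 (by rw [← map_mul, hc, map_zero]))

theorem IsSubdirectProduct.nonZeroDivisors_le_comap (h : IsSubdirectProduct π₁ π₂) {a : A}
    (ha₁ : π₁ a ∈ R⁰) (ha₂ : π₂ a = 0) : A⁰ ≤ R⁰.comap π₁ := by
  refine fun u hu => mem_nonZeroDivisors_iff_right.2 fun r hr => ?_
  obtain ⟨c, rfl⟩ := h.surjective_fst r
  have hca : c * a = 0 := (mul_right_mem_nonZeroDivisors_eq_zero_iff hu).1 <|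
    eq_zero_of_ker_inf_ker_eq_bot h.ker_inf_ker_eq_bot
      (by rw [map_mul, map_mul, mul_right_comm, hr, zero_mul])
      (by rw [map_mul, map_mul, ha₂, mul_zero, zero_mul])
  exact (mul_right_mem_nonZeroDivisors_eq_zero_iff ha₁).1 (by rw [← map_mul, hca, map_zero])

theorem injective_prod_map_fractionRing_of_ker_inf_ker_eq_bot
    (h : RingHom.ker π₁ ⊓ RingHom.ker π₂ = ⊥) (h₁ : A⁰ ≤ R⁰.comap π₁) (h₂ : A⁰ ≤ S⁰.comap π₂) :
    Function.Injective ((IsLocalization.map (FractionRing R) π₁ h₁ :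
      FractionRing A →+* FractionRing R).prod (IsLocalization.map (FractionRing S) π₂ h₂)) := by
  refine (injective_iff_map_eq_zero _).2 fun w hw => ?_
  obtain ⟨⟨c, x⟩, rfl⟩ := IsLocalization.mk'_surjective A⁰ w
  simp only [RingHom.prod_apply, IsLocalization.map_mk', Prod.mk_eq_zero,
    IsLocalization.mk'_eq_zero_iff, mul_left_coe_nonZeroDivisors_eq_zero_iff, exists_const] at hw
  simp only [eq_zero_of_ker_inf_ker_eq_bot h hw.1 hw.2, IsLocalization.mk'_zero]

theorem IsSubdirectProduct.isIntegral_mk'_iff (h : IsSubdirectProduct π₁ π₂)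
    (h₁ : A⁰ ≤ R⁰.comap π₁) (h₂ : A⁰ ≤ S⁰.comap π₂) (y : A) {x : A} (hx : x ∈ A⁰) :
    IsIntegral A (IsLocalization.mk' (FractionRing A) y ⟨x, hx⟩) ↔
      IsIntegral R (IsLocalization.mk' (FractionRing R) (π₁ y) (⟨π₁ x, h₁ hx⟩ : R⁰)) ∧
      IsIntegral S (IsLocalization.mk' (FractionRing S) (π₂ y) (⟨π₂ x, h₂ hx⟩ : S⁰)) := by
  set Φ : FractionRing A →+* FractionRing R × FractionRing S :=
    (IsLocalization.map _ π₁ h₁).prod (IsLocalization.map _ π₂ h₂)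
  have hΦ : Φ.comp (algebraMap A (FractionRing A)) =
      ((algebraMap R _).comp π₁).prod ((algebraMap S _).comp π₂) :=
    RingHom.ext fun u => by simp [Φ, IsLocalization.map_eq]
  rw [IsIntegral, ← RingHom.IsIntegralElem.map_iff
      (injective_prod_map_fractionRing_of_ker_inf_ker_eq_bot h.ker_inf_ker_eq_bot h₁ h₂),
    hΦ, RingHom.isIntegralElem_prod_iff]
  simp only [RingHom.prod_apply, IsLocalization.map_mk',
    RingHom.isIntegralElem_comp_iff_of_surjective h.surjective_fst,
    RingHom.isIntegralElem_comp_iff_of_surjective h.surjective_snd]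
  rfl

theorem IsWeaklyArfRing.of_isSubdirectProduct [IsLocalRing R] (hA : IsWeaklyArfRing A)
    (h : IsSubdirectProduct π₁ π₂) (h₁ : A⁰ ≤ R⁰.comap π₁) (h₂ : A⁰ ≤ S⁰.comap π₂)
    (hm : ∀ x ∈ maximalIdeal R, ∃ u, π₁ u = x ∧ π₂ u = 0) (hb : ∃ b, π₁ b = 0 ∧ π₂ b ∈ S⁰) :
    IsWeaklyArfRing R := by
  intro x y z hx hy hz
  by_cases hxm : x ∈ maximalIdeal R
  swap
  · rw [Ideal.span_singleton_eq_top.2 (notMem_maximalIdeal.1 hxm)]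
    exact Submodule.mem_top
  obtain ⟨b, hb₁, hb₂⟩ := hb
  obtain ⟨x', rfl, hx'⟩ := hm x hxm
  obtain ⟨y', rfl, hy'⟩ := hm _ (mem_maximalIdeal_of_isIntegral_mk' hx hxm hy)
  obtain ⟨z', rfl, hz'⟩ := hm _ (mem_maximalIdeal_of_isIntegral_mk' hx hxm hz)
  have hX : x' + b ∈ A⁰ := mem_nonZeroDivisors_of_ker_inf_ker_eq_bot h.ker_inf_ker_eq_bot
    (by simpa [hb₁] using hx) (by simpa [hx'] using hb₂)
  have hX₁ : (⟨π₁ (x' + b), h₁ hX⟩ : R⁰) = ⟨π₁ x', hx⟩ := Subtype.ext (by simp [hb₁])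
  have key := hA (x' + b) y' z' hX
    ((h.isIntegral_mk'_iff h₁ h₂ _ hX).2 ⟨by rwa [hX₁], by simp [hy', isIntegral_zero]⟩)
    ((h.isIntegral_mk'_iff h₁ h₂ _ hX).2 ⟨by rwa [hX₁], by simp [hz', isIntegral_zero]⟩)
  simpa [Ideal.map_span, hb₁] using Ideal.mem_map_of_mem π₁ key

end SubdirectProduct

namespace RingHom

variable {R S k : Type*} [CommRing R] [CommRing S] [CommRing k] {f : R →+* k} {g : S →+* k}

theorem isSubdirectProduct_pullback (hf : Function.Surjective f) (hg : Function.Surjective g) :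
    IsSubdirectProduct (f.pullbackFst g) (f.pullbackSnd g) where
  ker_inf_ker_eq_bot := eq_bot_iff.2 fun _ hu => Subtype.ext (Prod.ext hu.1 hu.2)
  surjective_fst := surjective_pullbackFst_of_surjective f g hg
  surjective_snd := surjective_pullbackSnd_of_surjective f g hf

theorem isWeaklyArfRing_pullback [IsLocalRing R] [IsLocalRing S]
    (hkf : ker f = maximalIdeal R) (hkg : ker g = maximalIdeal S)
    (h : IsSubdirectProduct (f.pullbackFst g) (f.pullbackSnd g))
    (h₁ : (f.pullback g)⁰ ≤ R⁰.comap (f.pullbackFst g))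
    (h₂ : (f.pullback g)⁰ ≤ S⁰.comap (f.pullbackSnd g))
    (hR : IsWeaklyArfRing R) (hS : IsWeaklyArfRing S) : IsWeaklyArfRing (f.pullback g) := by
  intro X Y Z hX hY hZ
  rw [h.isIntegral_mk'_iff h₁ h₂] at hY hZ
  obtain ⟨r, hr⟩ := Ideal.mem_span_singleton'.1 (hR _ _ _ _ hY.1 hZ.1)
  obtain ⟨s, hs⟩ := Ideal.mem_span_singleton'.1 (hS _ _ _ _ hY.2 hZ.2)
  have hsq (u : f.pullback g) : f (f.pullbackFst g u) = g (f.pullbackSnd g u) :=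
    RingHom.congr_fun (pullback_comm_sq f g) u
  have hrs : f r = g s := by
    by_cases hxm : f.pullbackFst g X ∈ maximalIdeal R
    · have hxm' : f.pullbackSnd g X ∈ maximalIdeal S := by
        rwa [← hkg, mem_ker, ← hsq, ← mem_ker, hkf]
      have hr₀ := mem_maximalIdeal_of_mul_eq_mul (h₁ hX) hxm hY.1 hZ.1 hr
      have hs₀ := mem_maximalIdeal_of_mul_eq_mul (h₂ hX) hxm' hY.2 hZ.2 hs
      rw [← hkf, mem_ker] at hr₀
      rw [← hkg, mem_ker] at hs₀
      rw [hr₀, hs₀]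
    · refine ((notMem_maximalIdeal.1 hxm).map f).mul_right_cancel ?_
      calc f r * f (f.pullbackFst g X) = f (f.pullbackFst g Y) * f (f.pullbackFst g Z) := by
            rw [← map_mul, hr, map_mul]
        _ = g s * f (f.pullbackFst g X) := by rw [hsq, hsq, hsq, ← map_mul, ← hs, map_mul]
  exact Ideal.mem_span_singleton'.2 ⟨⟨(r, s), hrs⟩, Subtype.ext (Prod.ext hr hs)⟩

end RingHom

theorem weaklyArf_fiberProduct_general (R S k : Type*) [CommRing R] [CommRing S] [Field k]
    [IsLocalRing R] [IsLocalRing S]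
    (f : R →+* k) (g : S →+* k)
    (hf : Function.Surjective f) (hg : Function.Surjective g)
    (hkf : RingHom.ker f = IsLocalRing.maximalIdeal R)
    (hkg : RingHom.ker g = IsLocalRing.maximalIdeal S)
    (hdR : RingDepthGE R 1) (hdS : RingDepthGE S 1) :
    IsWeaklyArfRing
        (RingHom.eqLocus (f.comp (RingHom.fst R S)) (g.comp (RingHom.snd R S))) ↔
      (IsWeaklyArfRing R ∧ IsWeaklyArfRing S) := by
  have h := RingHom.isSubdirectProduct_pullback hf hg
  have hm₁ : ∀ x ∈ maximalIdeal R, ∃ u, f.pullbackFst g u = x ∧ f.pullbackSnd g u = 0 :=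
    fun x hx => ⟨⟨(x, 0), show f x = g 0 by rwa [map_zero, ← RingHom.mem_ker, hkf]⟩, rfl, rfl⟩
  have hm₂ : ∀ y ∈ maximalIdeal S, ∃ u, f.pullbackSnd g u = y ∧ f.pullbackFst g u = 0 :=
    fun y hy => ⟨⟨(0, y), show f 0 = g y by rwa [map_zero, eq_comm, ← RingHom.mem_ker, hkg]⟩,
      rfl, rfl⟩
  obtain ⟨a, ham, ha⟩ := hdR.exists_mem_maximalIdeal_mem_nonZeroDivisors
  obtain ⟨b, hbm, hb⟩ := hdS.exists_mem_maximalIdeal_mem_nonZeroDivisors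
  obtain ⟨a', rfl, ha'⟩ := hm₁ a ham
  obtain ⟨b', rfl, hb'⟩ := hm₂ b hbm
  have h₁ := h.nonZeroDivisors_le_comap ha ha'
  have h₂ := h.symm.nonZeroDivisors_le_comap hb hb'
  exact ⟨fun hA => ⟨hA.of_isSubdirectProduct h h₁ h₂ hm₁ ⟨b', hb', hb⟩,
      hA.of_isSubdirectProduct h.symm h₂ h₁ hm₂ ⟨a', ha', ha⟩⟩,
    fun ⟨hR, hS⟩ => RingHom.isWeaklyArfRing_pullback hkf hkg h h₁ h₂ hR hS⟩

/-- Let `(R, m)` and `(S, n)` be Noetherian local rings with a common residue field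
`k` (via surjections `f : R → k`, `g : S → k` with kernels `m` and `n`), and suppose
`depth R > 0` and `depth S > 0`.  Then the fiber product
`A = R ×_k S = {(a, b) : f a = g b}` is weakly Arf iff both `R` and `S` are. -/
theorem weaklyArf_fiberProduct (R S k : Type*) [CommRing R] [CommRing S] [Field k]
    [IsNoetherianRing R] [IsNoetherianRing S] [IsLocalRing R] [IsLocalRing S]
    (f : R →+* k) (g : S →+* k)
    (hf : Function.Surjective f) (hg : Function.Surjective g)
    (hkf : RingHom.ker f = IsLocalRing.maximalIdeal R)
    (hkg : RingHom.ker g = IsLocalRing.maximalIdeal S)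
    (hdR : RingDepthGE R 1) (hdS : RingDepthGE S 1) :
    IsWeaklyArfRing
        (RingHom.eqLocus (f.comp (RingHom.fst R S)) (g.comp (RingHom.snd R S))) ↔
      (IsWeaklyArfRing R ∧ IsWeaklyArfRing S) :=
  weaklyArf_fiberProduct_general R S k f g hf hg hkf hkg hdR hdS
end
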